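/- arXiv:2302.03300 — 7 statements merged into one kernel-verified Lean document; each statement's English description precedes it below -/
import Mathlib

section
/- Let L̂ : Ω → 𝕍⁺ be such that ω ↦ L̂(ω)(t) is 𝓕-measurable for every t ∈ [0,T). For ℓ ∈ ℝ define τ_ℓ(ω) := inf{t ∈ [0,T) : L̂(ω)(t) ≥ ℓ} and τ'_ℓ(ω) := inf{t ∈ [0,T) : L̂(ω)(t) > ℓ}, with the convention inf ∅ := T. Then there exists a countable set 𝕃₀ ⊂ ℝ such that for every ℓ ∈ ℝ ∖ 𝕃₀ one has ℙ[τ_ℓ = τ'_ℓ] = 1. -/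
/-!
Since `τ_ℓ ≤ τ'_ℓ ≤ τ_ℓ'` for `ℓ < ℓ'`, the intervals `(𝔼 τ_ℓ, 𝔼 τ'_ℓ)` are pairwise disjoint,
so only countably many of them are nonempty. For every other level the bounded random times
`τ_ℓ ≤ τ'_ℓ` have the same expectation and hence agree almost surely. Measurability of the
hitting times comes from monotonicity of the paths: `τ_ℓ < a` can be tested at rational times.
-/

open MeasureTheory Filter Set Topology

noncomputable section

/-- The order topology on `ℝ ∪ {−∞}`. -/
instance : TopologicalSpace (WithBot ℝ) := Preorder.topology _
instance : OrderTopology (WithBot ℝ) := ⟨rfl⟩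
/-- The Borel σ-algebra on `ℝ ∪ {−∞}`. -/
instance : MeasurableSpace (WithBot ℝ) := borel _

/-- Membership in the space `𝕍⁺` of nondecreasing, left-continuous functions
`v : [0,T) → ℝ ∪ {−∞}` with `v 0 = −∞` and `v` real-valued on `(0,T)`
(encoded as functions `ℝ → WithBot ℝ`, normalized to `⊥` outside `(0,T)`;
left-continuity of a nondecreasing function is expressed in order-theoretic
terms: `v t` is the least upper bound of the values of `v` on `[0,t)`). -/
def InVPlus (T : ℝ) (v : ℝ → WithBot ℝ) : Prop :=
  (∀ t : ℝ, t ∉ Set.Ioo 0 T → v t = ⊥) ∧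
  (∀ s t : ℝ, 0 ≤ s → s ≤ t → t < T → v s ≤ v t) ∧
  (∀ t : ℝ, t ∈ Set.Ioo 0 T → v t ≠ ⊥) ∧
  (∀ t : ℝ, t ∈ Set.Ioo 0 T → IsLUB (v '' Set.Ico 0 t) (v t))

instance : BorelSpace (WithBot ℝ) := ⟨rfl⟩

theorem countable_setOf_lt_of_forall_lt_le {ι : Type*} [LinearOrder ι] {F G : ι → ℝ}
    (h : ∀ i j, i < j → G i ≤ F j) : {i | F i < G i}.Countable := by
  refine PairwiseDisjoint.countable_of_isOpen (s := fun i => Ioo (F i) (G i)) ?_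
    (fun _ _ => isOpen_Ioo) (fun _ hi => nonempty_Ioo.2 hi)
  intro i _ j _ hij
  rcases hij.lt_or_gt with hij | hji
  · exact disjoint_left.2 fun x hxi hxj => lt_irrefl x ((hxi.2.trans_le (h i j hij)).trans hxj.1)
  · exact disjoint_left.2 fun x hxi hxj => lt_irrefl x ((hxj.2.trans_le (h j i hji)).trans hxi.1)

theorem countable_setOf_not_ae_eq_of_interlacing {ι Ω : Type*} [LinearOrder ι]
    [MeasurableSpace Ω] {μ : Measure Ω} {X Y : ι → Ω → ℝ}
    (hX : ∀ i, Integrable (X i) μ) (hY : ∀ i, Integrable (Y i) μ)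
    (hXY : ∀ i, X i ≤ᵐ[μ] Y i) (hYX : ∀ i j, i < j → Y i ≤ᵐ[μ] X j) :
    {i | ¬ X i =ᵐ[μ] Y i}.Countable := by
  refine (countable_setOf_lt_of_forall_lt_le (F := fun i => ∫ ω, X i ω ∂μ)
    (G := fun i => ∫ ω, Y i ω ∂μ) fun i j hij => integral_mono_ae (hY i) (hX j) (hYX i j hij)).mono
    fun i hi => ?_
  rw [mem_ofPred_eq, ← integral_eq_iff_of_ae_le (hX i) (hY i) (hXY i)] at hi
  exact (integral_mono_ae (hX i) (hY i) (hXY i)).lt_of_ne hi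

section HittingTime

variable {β : Type*} (T : ℝ) (v : ℝ → β) (C : Set β)

def hittingTime : ℝ :=
  sInf (insert T {t | 0 ≤ t ∧ t < T ∧ v t ∈ C})

theorem bddBelow_hittingTimeSet : BddBelow (insert T {t | 0 ≤ t ∧ t < T ∧ v t ∈ C}) := by
  refine ⟨min 0 T, ?_⟩
  rintro t (rfl | ht)
  exacts [min_le_right _ _, (min_le_left _ _).trans ht.1]

theorem hittingTime_le : hittingTime T v C ≤ T :=
  csInf_le (bddBelow_hittingTimeSet T v C) (mem_insert _ _)

theorem hittingTime_nonneg (hT : 0 ≤ T) : 0 ≤ hittingTime T v C := by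
  refine le_csInf (insert_nonempty _ _) ?_
  rintro t (rfl | ht)
  exacts [hT, ht.1]

variable {T v C}

theorem hittingTime_anti {C' : Set β} (h : C ⊆ C') : hittingTime T v C' ≤ hittingTime T v C := by
  refine csInf_le_csInf (bddBelow_hittingTimeSet T v C') (insert_nonempty _ _) ?_
  exact insert_subset_insert fun t ht => ⟨ht.1, ht.2.1, h ht.2.2⟩

theorem hittingTime_lt_iff [Preorder β] (hv : MonotoneOn v (Ico 0 T)) (hC : IsUpperSet C)
    (a : ℝ) :
    hittingTime T v C < a ↔
      T < a ∨ ∃ q : ℚ, 0 ≤ (q : ℝ) ∧ (q : ℝ) < T ∧ (q : ℝ) < a ∧ v q ∈ C := by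
  constructor
  · intro h
    obtain ⟨t, ht, hta⟩ := (csInf_lt_iff (bddBelow_hittingTimeSet T v C) (insert_nonempty _ _)).1 h
    rcases ht with rfl | ⟨ht0, htT, htC⟩
    · exact Or.inl hta
    obtain ⟨q, htq, hq⟩ := exists_rat_btwn (lt_min hta htT)
    have hq0 : 0 ≤ (q : ℝ) := ht0.trans htq.le
    refine Or.inr ⟨q, hq0, hq.trans_le (min_le_right _ _), hq.trans_le (min_le_left _ _), ?_⟩
    exact hC (hv ⟨ht0, htT⟩ ⟨hq0, hq.trans_le (min_le_right _ _)⟩ htq.le) htC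
  · rintro (hTa | ⟨q, hq0, hqT, hqa, hqC⟩)
    · exact (hittingTime_le T v C).trans_lt hTa
    · exact (csInf_le (bddBelow_hittingTimeSet T v C)
        (mem_insert_of_mem _ ⟨hq0, hqT, hqC⟩)).trans_lt hqa

variable {Ω : Type*} [MeasurableSpace Ω] [Preorder β] [MeasurableSpace β] {X : Ω → ℝ → β}

theorem measurable_hittingTime (hmono : ∀ ω, MonotoneOn (X ω) (Ico 0 T))
    (hmeas : ∀ t, 0 ≤ t → t < T → Measurable fun ω => X ω t)
    (hC : IsUpperSet C) (hCm : MeasurableSet C) :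
    Measurable fun ω => hittingTime T (X ω) C := by
  refine measurable_of_Iio fun a => ?_
  have hset : (fun ω => hittingTime T (X ω) C) ⁻¹' Iio a = {_ω | T < a} ∪
      ⋃ q : ℚ, {ω | (0 ≤ (q : ℝ) ∧ (q : ℝ) < T ∧ (q : ℝ) < a) ∧ X ω q ∈ C} := by
    ext ω
    simp only [mem_preimage, mem_Iio, hittingTime_lt_iff (hmono ω) hC, mem_union, mem_iUnion,
      mem_ofPred_eq, and_assoc]
  rw [hset]
  refine (MeasurableSet.const _).union (MeasurableSet.iUnion fun q => ?_)
  by_cases hq : 0 ≤ (q : ℝ) ∧ (q : ℝ) < T ∧ (q : ℝ) < a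
  · simp only [hq, true_and]
    exact hmeas q hq.1 hq.2.1 hCm
  · simp only [hq, false_and, ofPred_false, MeasurableSet.empty]

theorem integrable_hittingTime {μ : Measure Ω} [IsFiniteMeasure μ] (hT : 0 ≤ T)
    (hmono : ∀ ω, MonotoneOn (X ω) (Ico 0 T))
    (hmeas : ∀ t, 0 ≤ t → t < T → Measurable fun ω => X ω t)
    (hC : IsUpperSet C) (hCm : MeasurableSet C) :
    Integrable (fun ω => hittingTime T (X ω) C) μ := by
  refine .of_bound (measurable_hittingTime hmono hmeas hC hCm).aestronglyMeasurable T
    (ae_of_all _ fun ω => ?_)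
  rw [Real.norm_of_nonneg (hittingTime_nonneg T _ C hT)]
  exact hittingTime_le T _ C

end HittingTime

theorem InVPlus.monotoneOn {T : ℝ} {v : ℝ → WithBot ℝ} (hv : InVPlus T v) :
    MonotoneOn v (Ico 0 T) :=
  fun s hs t ht hst => hv.2.1 s t hs.1 hst ht.2

/-- **Only countably many bad levels (Proposition 3.3 (i)).**
If `L̂ : Ω → 𝕍⁺` is a random element with `ω ↦ L̂(ω)(t)` measurable for every
`t ∈ [0,T)`, and if for `ℓ ∈ ℝ` we set `τ_ℓ = inf {t ∈ [0,T) : L̂(t) ≥ ℓ}` and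
`τ'_ℓ = inf {t ∈ [0,T) : L̂(t) > ℓ}` (with `inf ∅ = T`), then there exists a countable
set `𝕃₀ ⊂ ℝ` such that `ℙ[τ_ℓ = τ'_ℓ] = 1` for every `ℓ ∉ 𝕃₀`. -/
theorem countably_many_bad_levels
    {Ω : Type*} [MeasurableSpace Ω] (P : Measure Ω) [IsProbabilityMeasure P]
    (T : ℝ) (hT : 0 < T)
    (Lh : Ω → ℝ → WithBot ℝ)
    (hmem : ∀ ω, InVPlus T (Lh ω))
    (hmeas : ∀ t : ℝ, 0 ≤ t → t < T → Measurable fun ω => Lh ω t) :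
    ∃ L0 : Set ℝ, L0.Countable ∧
      ∀ ℓ : ℝ, ℓ ∉ L0 →
        P {ω | sInf (insert T {t : ℝ | 0 ≤ t ∧ t < T ∧ (ℓ : WithBot ℝ) ≤ Lh ω t})
             = sInf (insert T {t : ℝ | 0 ≤ t ∧ t < T ∧ (ℓ : WithBot ℝ) < Lh ω t})} = 1 := by
  have hmono ω := (hmem ω).monotoneOn
  let τ (ℓ : ℝ) (ω : Ω) := hittingTime T (Lh ω) (Ici (ℓ : WithBot ℝ))
  let τ' (ℓ : ℝ) (ω : Ω) := hittingTime T (Lh ω) (Ioi (ℓ : WithBot ℝ))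
  have hτ_le_τ' ℓ : τ ℓ ≤ᵐ[P] τ' ℓ := ae_of_all _ fun _ => hittingTime_anti Ioi_subset_Ici_self
  have hτ'_le_τ ℓ ℓ' (h : ℓ < ℓ') : τ' ℓ ≤ᵐ[P] τ ℓ' :=
    ae_of_all _ fun _ => hittingTime_anti (Ici_subset_Ioi.2 (WithBot.coe_lt_coe.2 h))
  refine ⟨{ℓ | ¬ τ ℓ =ᵐ[P] τ' ℓ}, countable_setOf_not_ae_eq_of_interlacing
    (fun _ => integrable_hittingTime hT.le hmono hmeas (isUpperSet_Ici _) measurableSet_Ici)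
    (fun _ => integrable_hittingTime hT.le hmono hmeas (isUpperSet_Ioi _) measurableSet_Ioi)
    hτ_le_τ' hτ'_le_τ, fun ℓ hℓ => ?_⟩
  have hτ_eq_meas : MeasurableSet {ω | τ ℓ ω = τ' ℓ ω} :=
    measurableSet_eq_fun (measurable_hittingTime hmono hmeas (isUpperSet_Ici _) measurableSet_Ici)
      (measurable_hittingTime hmono hmeas (isUpperSet_Ioi _) measurableSet_Ioi)
  exact (mem_ae_iff_prob_eq_one hτ_eq_meas).1 (not_not.1 hℓ)

end
end

section
/- There exists a unique Borel probability measure m on (𝕍⁺, d_L) such that m is the law of the 𝕍⁺-valued random element ω ↦ (t ↦ L(ω)(t) + m_t(φ)), i.e. m = ℙ ∘ (L + m_·(φ))⁻¹, where for t ∈ (0,T) one sets m_t(φ) := ∫_{𝕍⁺} φ(v(t)) m(dv) and the sum is understood with the convention (−∞) + c = −∞ at t = 0 (note that t ↦ m_t(φ) is automatically nondecreasing, bounded and left-continuous, so that L(ω) + m_·(φ) again lies in 𝕍⁺). -/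
open MeasureTheory Filter Set Topology

noncomputable section

/-- The Lévy metric `d_L` on `𝕍⁺`. -/
noncomputable def dL (T : ℝ) (v₁ v₂ : ℝ → WithBot ℝ) : ℝ :=
  sInf {ε : ℝ | 0 ≤ ε ∧ ∀ t : ℝ, t ∈ Set.Ioo 0 T →
    (v₁ (max (t - ε) 0)).map (fun x => x - ε) ≤ v₂ t ∧
    (v₂ (max (t - ε) 0)).map (fun x => x - ε) ≤ v₁ t}

/-- The Polish space `(𝕍⁺, d_L)`, as a type. -/
structure VPlus (T : ℝ) where
  toFun : ℝ → WithBot ℝ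
  mem : InVPlus T toFun

/-- The metric topology of `d_L` on `𝕍⁺` (generated by the open balls). -/
instance (T : ℝ) : TopologicalSpace (VPlus T) :=
  TopologicalSpace.generateFrom
    {U : Set (VPlus T) | ∃ v : VPlus T, ∃ ε : ℝ, 0 < ε ∧
      U = {w : VPlus T | dL T v.toFun w.toFun < ε}}

/-- The Borel σ-algebra of `(𝕍⁺, d_L)`. -/
instance (T : ℝ) : MeasurableSpace (VPlus T) := borel (VPlus T)

/-! For a fixed point `m`, the function `c t = m_t(φ)` must solve `c = F_t c` with
`F_t c = E[φ(L_t + c)]` for every `t`. Since `0 ≤ φ' < 1`, the map `c ↦ c - F_t c` is a continuous,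
strictly increasing bijection of `ℝ`, so this scalar equation has exactly one solution `g t`; this
gives uniqueness. For existence, `g` inherits monotonicity from `L`, and left-continuity because
its left limits solve the limiting equation (each `F_s` is `1`-Lipschitz and `F_s → F_t` by
dominated convergence). Hence `L + g` is again `𝕍⁺`-valued, measurable because adding a fixed
nondecreasing function is `1`-Lipschitz for `d_L`, and its law is the fixed point. -/

namespace WithBot

theorem isLUB_coe_image_iff {α : Type*} [Preorder α] {s : Set α} {a : α} (hs : s.Nonempty) :
    IsLUB (((↑) : α → WithBot α) '' s) a ↔ IsLUB s a := by
  refine ⟨IsLUB.of_image coe_le_coe, fun h => ⟨?_, fun b hb => ?_⟩⟩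
  · rintro _ ⟨x, hx, rfl⟩
    exact coe_le_coe.2 (h.1 hx)
  · induction b using recBotCoe with
    | bot =>
      obtain ⟨x, hx⟩ := hs
      exact absurd (hb ⟨x, hx, rfl⟩) (not_coe_le_bot x)
    | coe b => exact coe_le_coe.2 (h.2 fun x hx => coe_le_coe.1 (hb ⟨x, hx, rfl⟩))

end WithBot

theorem MonotoneOn.isLUB_image_Ioo_iff_continuousWithinAt {α β : Type*} [LinearOrder α]
    [TopologicalSpace α] [OrderTopology α] [DenselyOrdered α] [ConditionallyCompleteLinearOrder β]
    [TopologicalSpace β] [OrderTopology β] {r : α → β} {a t : α} (hat : a < t)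
    (hr : MonotoneOn r (Ioc a t)) :
    IsLUB (r '' Ioo a t) (r t) ↔ ContinuousWithinAt r (Iio t) t := by
  have hne : (Ioo a t).Nonempty := nonempty_Ioo.2 hat
  have hbdd : BddAbove (r '' Ioo a t) :=
    ⟨r t, forall_mem_image.2 fun s hs => hr (Ioo_subset_Ioc_self hs) ⟨hat, le_rfl⟩ hs.2.le⟩
  have hlim := (hr.mono Ioo_subset_Ioc_self).tendsto_nhdsWithin_Ioo_left hne hbdd
  refine ⟨fun h => ?_, fun h => ?_⟩
  · rwa [ContinuousWithinAt, ← h.csSup_eq (hne.image r)]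
  · have := nhdsLT_neBot_of_exists_lt ⟨a, hat⟩
    rw [tendsto_nhds_unique h hlim]
    exact isLUB_csSup (hne.image r) hbdd

theorem lipschitzWith_one_of_monotone_sub {f : ℝ → ℝ} (hf : Monotone f)
    (hsub : Monotone fun x => x - f x) : LipschitzWith 1 f := by
  refine LipschitzWith.of_le_add fun x y => ?_
  rcases le_total x y with hxy | hyx
  · linarith [hf hxy, dist_nonneg (x := x) (y := y)]
  · linarith [hsub hyx, Real.dist_eq x y, le_abs_self (x - y)]

theorem existsUnique_fixedPoint_of_strictMono_sub {f : ℝ → ℝ} {C : ℝ} (hf : Continuous f)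
    (hC : ∀ x, |f x| ≤ C) (hsub : StrictMono fun x => x - f x) : ∃! x, f x = x := by
  have hsurj : Function.Surjective fun x => x - f x := by
    refine Continuous.surjective (f := fun x => x - f x) (continuous_id.sub hf) ?_ ?_
    · exact tendsto_atTop_mono (fun x => by dsimp only [id]; linarith [(abs_le.1 (hC x)).2])
        (tendsto_atTop_add_const_right _ (-C) tendsto_id)
    · exact tendsto_atBot_mono (fun x => by dsimp only [id]; linarith [(abs_le.1 (hC x)).1])
        (tendsto_atBot_add_const_right _ C tendsto_id)
  obtain ⟨x, hx⟩ := hsurj 0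
  refine ⟨x, by linarith [hx], fun y hy => hsub.injective ?_⟩
  simp only [hy, hx, sub_self]

theorem fixedPoint_le_of_le {f g : ℝ → ℝ} (hfg : ∀ x, f x ≤ g x)
    (hg : StrictMono fun x => x - g x) {x y : ℝ} (hx : f x = x) (hy : g y = y) : x ≤ y := by
  by_contra! hyx
  linarith [hg hyx, hfg x]

theorem eq_of_tendsto_of_fixedPoints {ι : Type*} {l : Filter ι} [l.NeBot] {f : ι → ℝ → ℝ}
    {K : NNReal} (hf : ∀ i, LipschitzWith K (f i)) {x : ι → ℝ} (hx : ∀ i, f i (x i) = x i)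
    {u y : ℝ} (hxu : Tendsto x l (𝓝 u)) (hfu : Tendsto (fun i => f i u) l (𝓝 y)) : y = u := by
  have hdist : Tendsto (fun i => (K + 1) * dist (x i) u) l (𝓝 0) := by
    simpa using (tendsto_iff_dist_tendsto_zero.1 hxu).const_mul ((K : ℝ) + 1)
  refine tendsto_nhds_unique hfu (tendsto_iff_dist_tendsto_zero.2 ?_)
  refine squeeze_zero (fun _ => dist_nonneg) (fun i => ?_) hdist
  calc dist (f i u) u ≤ dist (f i u) (f i (x i)) + dist (x i) u := by
        simpa only [hx] using dist_triangle (f i u) (x i) u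
    _ ≤ K * dist u (x i) + dist (x i) u := by gcongr; exact (hf i).dist_le_mul u (x i)
    _ = (K + 1) * dist (x i) u := by rw [dist_comm u]; ring

section IntegralCompAdd

variable {Ω : Type*} [MeasurableSpace Ω] {μ : Measure Ω} {φ : ℝ → ℝ} {C : ℝ} {X Y : Ω → ℝ}

theorem integral_pos_of_forall_pos [NeZero μ] {f : Ω → ℝ} (hf : ∀ ω, 0 < f ω)
    (hfi : Integrable f μ) : 0 < ∫ ω, f ω ∂μ := by
  have hsupp : Function.support f = univ := eq_univ_of_forall fun ω => (hf ω).ne'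
  rw [integral_pos_iff_support_of_nonneg (fun ω => (hf ω).le) hfi, hsupp,
    Measure.measure_univ_pos]
  exact NeZero.ne μ

variable [IsProbabilityMeasure μ]

theorem integrable_comp_add (hφ : Continuous φ) (hC : ∀ x, |φ x| ≤ C) (hX : Measurable X)
    (c : ℝ) : Integrable (fun ω => φ (X ω + c)) μ :=
  .of_bound (hφ.measurable.comp (hX.add_const c)).aestronglyMeasurable C
    (ae_of_all _ fun _ => (Real.norm_eq_abs _).trans_le (hC _))

theorem abs_integral_comp_add_le (hC : ∀ x, |φ x| ≤ C) (c : ℝ) :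
    |∫ ω, φ (X ω + c) ∂μ| ≤ C := by
  simpa using norm_integral_le_of_norm_le_const (μ := μ)
    (ae_of_all _ fun ω => (Real.norm_eq_abs _).trans_le (hC (X ω + c)))

theorem integral_comp_add_le_of_le (hφ : Continuous φ) (hφ_mono : Monotone φ)
    (hC : ∀ x, |φ x| ≤ C) (hX : Measurable X) (hY : Measurable Y) (hXY : ∀ ω, X ω ≤ Y ω)
    (c : ℝ) : ∫ ω, φ (X ω + c) ∂μ ≤ ∫ ω, φ (Y ω + c) ∂μ :=
  integral_mono (integrable_comp_add hφ hC hX c) (integrable_comp_add hφ hC hY c)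
    fun ω => hφ_mono (by linarith [hXY ω])

theorem monotone_integral_comp_add (hφ : Continuous φ) (hφ_mono : Monotone φ)
    (hC : ∀ x, |φ x| ≤ C) (hX : Measurable X) : Monotone fun c => ∫ ω, φ (X ω + c) ∂μ :=
  fun c c' hcc' => integral_mono (integrable_comp_add hφ hC hX c)
    (integrable_comp_add hφ hC hX c') fun ω => hφ_mono (by linarith)

theorem strictMono_sub_integral_comp_add (hφ : Continuous φ)
    (hφ_sub : StrictMono fun x => x - φ x) (hC : ∀ x, |φ x| ≤ C) (hX : Measurable X) :
    StrictMono fun c => c - ∫ ω, φ (X ω + c) ∂μ := by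
  intro c c' hcc'
  have hint := integrable_comp_add (μ := μ) hφ hC hX
  have hdiff : Integrable (fun ω => φ (X ω + c') - φ (X ω + c)) μ := (hint c').sub (hint c)
  have hpos : 0 < ∫ ω, ((c' - c) - (φ (X ω + c') - φ (X ω + c))) ∂μ :=
    integral_pos_of_forall_pos (fun ω => by linarith [hφ_sub (show X ω + c < X ω + c' by linarith)])
      ((integrable_const _).sub hdiff)
  rw [integral_sub (integrable_const _) hdiff, integral_sub (hint c') (hint c), integral_const,
    probReal_univ, one_smul] at hpos
  dsimp only
  linarith

theorem lipschitzWith_integral_comp_add (hφ_mono : Monotone φ)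
    (hφ_sub : StrictMono fun x => x - φ x) (hC : ∀ x, |φ x| ≤ C) (hX : Measurable X) :
    LipschitzWith 1 fun c => ∫ ω, φ (X ω + c) ∂μ :=
  have hφ := (lipschitzWith_one_of_monotone_sub hφ_mono hφ_sub.monotone).continuous
  lipschitzWith_one_of_monotone_sub (monotone_integral_comp_add hφ hφ_mono hC hX)
    (strictMono_sub_integral_comp_add hφ hφ_sub hC hX).monotone

theorem existsUnique_integral_comp_add_eq (hφ_mono : Monotone φ)
    (hφ_sub : StrictMono fun x => x - φ x) (hC : ∀ x, |φ x| ≤ C) (hX : Measurable X) :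
    ∃! c, ∫ ω, φ (X ω + c) ∂μ = c :=
  existsUnique_fixedPoint_of_strictMono_sub
    (lipschitzWith_integral_comp_add hφ_mono hφ_sub hC hX).continuous
    (abs_integral_comp_add_le hC)
    (strictMono_sub_integral_comp_add
      (lipschitzWith_one_of_monotone_sub hφ_mono hφ_sub.monotone).continuous hφ_sub hC hX)

theorem tendsto_integral_comp_add {ι : Type*} {l : Filter ι} [l.IsCountablyGenerated]
    {Z : ι → Ω → ℝ} (hφ : Continuous φ) (hC : ∀ x, |φ x| ≤ C) (hZ : ∀ i, Measurable (Z i))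
    (hlim : ∀ ω, Tendsto (Z · ω) l (𝓝 (X ω))) (c : ℝ) :
    Tendsto (fun i => ∫ ω, φ (Z i ω + c) ∂μ) l (𝓝 (∫ ω, φ (X ω + c) ∂μ)) :=
  tendsto_integral_filter_of_dominated_convergence (fun _ => C)
    (Eventually.of_forall fun i => (hφ.measurable.comp ((hZ i).add_const c)).aestronglyMeasurable)
    (Eventually.of_forall fun _ => ae_of_all _ fun _ => (Real.norm_eq_abs _).trans_le (hC _))
    (integrable_const C)
    (ae_of_all _ fun ω => (hφ.tendsto _).comp ((hlim ω).add_const c))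

end IntegralCompAdd

theorem isLUB_image_Ico_iff_of_eqOn {α β : Type*} [LinearOrder α] [DenselyOrdered α]
    [Preorder β] {f : α → WithBot β} {r : α → β} {a t : α} {b : β} (hat : a < t)
    (hfa : f a = ⊥) (hfr : EqOn f (WithBot.some ∘ r) (Ioo a t)) :
    IsLUB (f '' Ico a t) (b : WithBot β) ↔ IsLUB (r '' Ioo a t) b := by
  rw [← Ioo_insert_left hat, image_insert_eq, hfa, IsLUB, upperBounds_insert, Ici_bot,
    univ_inter, ← IsLUB, hfr.image_eq, image_comp,
    WithBot.isLUB_coe_image_iff ((nonempty_Ioo.2 hat).image r)]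

namespace VPlus

variable {T : ℝ}

/-- The real values of `v` on `(0,T)`; the junk value `0` stands in for `⊥` outside. -/
def toReal (v : VPlus T) (t : ℝ) : ℝ := WithBot.unbotD 0 (v.toFun t)

theorem eq_of_eqOn {v w : VPlus T} (h : EqOn v.toFun w.toFun (Ioo 0 T)) : v = w := by
  obtain ⟨v, hv⟩ := v
  obtain ⟨w, hw⟩ := w
  congr
  funext t
  by_cases ht : t ∈ Ioo 0 T
  · exact h ht
  · rw [hv.1 t ht, hw.1 t ht]

theorem toFun_eq_bot (v : VPlus T) {t : ℝ} (ht : t ∉ Ioo 0 T) : v.toFun t = ⊥ := v.mem.1 t ht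

theorem toFun_eq_coe_toReal (v : VPlus T) {t : ℝ} (ht : t ∈ Ioo 0 T) :
    v.toFun t = v.toReal t := by
  obtain ⟨x, hx⟩ := WithBot.ne_bot_iff_exists.1 (v.mem.2.2.1 t ht)
  rw [toReal, ← hx, WithBot.unbotD_coe]

theorem toReal_of_notMem (v : VPlus T) {t : ℝ} (ht : t ∉ Ioo 0 T) : v.toReal t = 0 := by
  rw [toReal, v.toFun_eq_bot ht, WithBot.unbotD_bot]

theorem monotoneOn_toReal (v : VPlus T) : MonotoneOn v.toReal (Ioo 0 T) := fun s hs t ht hst => by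
  have h := v.mem.2.1 s t hs.1.le hst ht.2
  rwa [v.toFun_eq_coe_toReal hs, v.toFun_eq_coe_toReal ht, WithBot.coe_le_coe] at h

theorem isLUB_toReal (v : VPlus T) {t : ℝ} (ht : t ∈ Ioo 0 T) :
    IsLUB (v.toReal '' Ioo 0 t) (v.toReal t) := by
  rw [← isLUB_image_Ico_iff_of_eqOn ht.1 (v.toFun_eq_bot (by simp))
    fun s hs => v.toFun_eq_coe_toReal ⟨hs.1, hs.2.trans ht.2⟩, ← v.toFun_eq_coe_toReal ht]
  exact v.mem.2.2.2 t ht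

theorem continuousWithinAt_toReal (v : VPlus T) {t : ℝ} (ht : t ∈ Ioo 0 T) :
    ContinuousWithinAt v.toReal (Iio t) t :=
  ((v.monotoneOn_toReal.mono (Ioc_subset_Ioo_right ht.2)).isLUB_image_Ioo_iff_continuousWithinAt
    ht.1).1 (v.isLUB_toReal ht)

def ofReal (r : ℝ → ℝ) (hr_mono : MonotoneOn r (Ioo 0 T))
    (hr_cont : ∀ t ∈ Ioo 0 T, ContinuousWithinAt r (Iio t) t) : VPlus T where
  toFun t := if t ∈ Ioo 0 T then (r t : WithBot ℝ) else ⊥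
  mem := by
    refine ⟨fun t ht => if_neg ht, fun s t hs hst htT => ?_, fun t ht => by simp [ht],
      fun t ht => ?_⟩
    · dsimp only
      by_cases hs' : s ∈ Ioo 0 T
      · have ht' : t ∈ Ioo 0 T := ⟨hs'.1.trans_le hst, htT⟩
        rw [if_pos hs', if_pos ht', WithBot.coe_le_coe]
        exact hr_mono hs' ht' hst
      · rw [if_neg hs']
        exact bot_le
    · dsimp only
      rw [if_pos ht]
      refine (isLUB_image_Ico_iff_of_eqOn ht.1 (if_neg (by simp))
        fun s hs => if_pos ⟨hs.1, hs.2.trans ht.2⟩).2 ?_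
      exact ((hr_mono.mono (Ioc_subset_Ioo_right ht.2)).isLUB_image_Ioo_iff_continuousWithinAt
        ht.1).2 (hr_cont t ht)

theorem toFun_ofReal {r : ℝ → ℝ} {hr_mono : MonotoneOn r (Ioo 0 T)}
    {hr_cont : ∀ t ∈ Ioo 0 T, ContinuousWithinAt r (Iio t) t} {t : ℝ} (ht : t ∈ Ioo 0 T) :
    (ofReal r hr_mono hr_cont).toFun t = r t :=
  if_pos ht

instance : Add (VPlus T) where
  add v w := ofReal (v.toReal + w.toReal)
    (fun _ hs _ ht hst =>
      add_le_add (v.monotoneOn_toReal hs ht hst) (w.monotoneOn_toReal hs ht hst))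
    fun _ ht => (v.continuousWithinAt_toReal ht).add (w.continuousWithinAt_toReal ht)

theorem toFun_add (v w : VPlus T) (t : ℝ) : (v + w).toFun t = v.toFun t + w.toFun t := by
  by_cases ht : t ∈ Ioo 0 T
  · rw [v.toFun_eq_coe_toReal ht, w.toFun_eq_coe_toReal ht, ← WithBot.coe_add]
    exact if_pos ht
  · rw [v.toFun_eq_bot ht, WithBot.bot_add]
    exact if_neg ht

theorem toReal_add (v w : VPlus T) (t : ℝ) : (v + w).toReal t = v.toReal t + w.toReal t := by
  by_cases ht : t ∈ Ioo 0 T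
  · rw [toReal, toFun_add, v.toFun_eq_coe_toReal ht, w.toFun_eq_coe_toReal ht, ← WithBot.coe_add,
      WithBot.unbotD_coe]
  · rw [(v + w).toReal_of_notMem ht, v.toReal_of_notMem ht, w.toReal_of_notMem ht, add_zero]

variable {u v w : VPlus T} {ε ε₁ ε₂ : ℝ}

/-- One half of the Lévy condition, `v((t-ε)∨0) - ε ≤ w(t)`, on real values: for `t ≤ ε` the
left side is `-∞`. -/
def LevyBelow (v w : VPlus T) (ε : ℝ) : Prop :=
  ∀ t ∈ Ioo 0 T, ε < t → v.toReal (t - ε) - ε ≤ w.toReal t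

def levySet (v w : VPlus T) : Set ℝ := {ε | 0 ≤ ε ∧ LevyBelow v w ε ∧ LevyBelow w v ε}

theorem levyBelow_iff (hε : 0 ≤ ε) :
    (∀ t ∈ Ioo 0 T, (v.toFun (max (t - ε) 0)).map (fun x => x - ε) ≤ w.toFun t) ↔
      LevyBelow v w ε := by
  refine forall₂_congr fun t ht => ?_
  rw [w.toFun_eq_coe_toReal ht]
  by_cases hεt : ε < t
  · have hmem : t - ε ∈ Ioo 0 T := ⟨by linarith, by linarith [ht.2]⟩
    rw [max_eq_left hmem.1.le, v.toFun_eq_coe_toReal hmem, WithBot.map_coe, WithBot.coe_le_coe]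
    exact ⟨fun h _ => h, fun h => h hεt⟩
  · rw [max_eq_right (by linarith), v.toFun_eq_bot (by simp), WithBot.map_bot]
    exact iff_of_true bot_le fun h => absurd h hεt

theorem dL_eq_sInf_levySet (v w : VPlus T) : dL T v.toFun w.toFun = sInf (levySet v w) := by
  refine congrArg sInf (Set.ext fun ε => and_congr_right fun hε => ?_)
  rw [← levyBelow_iff hε, ← levyBelow_iff hε]
  exact ⟨fun h => ⟨fun t ht => (h t ht).1, fun t ht => (h t ht).2⟩,
    fun h t ht => ⟨h.1 t ht, h.2 t ht⟩⟩

theorem levyBelow_refl (v : VPlus T) : LevyBelow v v 0 := fun t _ _ => by simp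

theorem LevyBelow.trans (h₁ : LevyBelow u v ε₁) (h₂ : LevyBelow v w ε₂) (hε₁ : 0 ≤ ε₁)
    (hε₂ : 0 ≤ ε₂) : LevyBelow u w (ε₁ + ε₂) := by
  intro t ht hεt
  have h := h₁ (t - ε₂) ⟨by linarith, by linarith [ht.2]⟩ (by linarith)
  rw [sub_sub, add_comm ε₂] at h
  linarith [h₂ t ht (by linarith)]

theorem LevyBelow.add_right (h : LevyBelow v w ε) (hε : 0 ≤ ε) (u : VPlus T) :
    LevyBelow (v + u) (w + u) ε := by
  intro t ht hεt
  rw [toReal_add, toReal_add]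
  linarith [h t ht hεt, u.monotoneOn_toReal ⟨by linarith, by linarith [ht.2]⟩ ht
    (show t - ε ≤ t by linarith [ht.1])]

theorem levySet_nonempty : (levySet v w).Nonempty :=
  ⟨max T 0, le_max_right T 0, fun _ ht h => absurd (ht.2.trans_le (le_max_left T 0)) h.not_gt,
    fun _ ht h => absurd (ht.2.trans_le (le_max_left T 0)) h.not_gt⟩

theorem levySet_bddBelow : BddBelow (levySet v w) := ⟨0, fun _ h => h.1⟩

theorem levySet_comm : levySet v w = levySet w v :=
  Set.ext fun _ => and_congr_right fun _ => and_comm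

open scoped Pointwise in
theorem levySet_add_subset : levySet u v + levySet v w ⊆ levySet u w := by
  rintro _ ⟨ε₁, ⟨hε₁, h₁, h₁'⟩, ε₂, ⟨hε₂, h₂, h₂'⟩, rfl⟩
  refine ⟨add_nonneg hε₁ hε₂, h₁.trans h₂ hε₁ hε₂, ?_⟩
  simpa only [add_comm ε₂ ε₁] using h₂'.trans h₁' hε₂ hε₁

theorem dL_self (v : VPlus T) : dL T v.toFun v.toFun = 0 := by
  rw [dL_eq_sInf_levySet]
  exact le_antisymm (csInf_le levySet_bddBelow ⟨le_rfl, levyBelow_refl v, levyBelow_refl v⟩)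
    (le_csInf levySet_nonempty fun _ h => h.1)

theorem dL_comm (v w : VPlus T) : dL T v.toFun w.toFun = dL T w.toFun v.toFun := by
  rw [dL_eq_sInf_levySet, dL_eq_sInf_levySet, levySet_comm]

open scoped Pointwise in
theorem dL_triangle (u v w : VPlus T) :
    dL T u.toFun w.toFun ≤ dL T u.toFun v.toFun + dL T v.toFun w.toFun := by
  simp only [dL_eq_sInf_levySet]
  rw [← csInf_add levySet_nonempty levySet_bddBelow levySet_nonempty levySet_bddBelow]
  exact csInf_le_csInf levySet_bddBelow (levySet_nonempty.add levySet_nonempty) levySet_add_subset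

theorem isOpen_iff_dL (s : Set (VPlus T)) :
    IsOpen s ↔ ∀ v ∈ s, ∃ ε > 0, ∀ w, dL T v.toFun w.toFun < ε → w ∈ s := by
  refine ⟨fun hs => ?_, fun h => isOpen_iff_forall_mem_open.2 fun v hv => ?_⟩
  · induction hs with
    | basic U hU =>
      obtain ⟨u, ε, -, rfl⟩ := hU
      intro v (hv : dL T u.toFun v.toFun < ε)
      exact ⟨ε - dL T u.toFun v.toFun, sub_pos.2 hv, fun w hw =>
        show dL T u.toFun w.toFun < ε by linarith [dL_triangle u v w]⟩
    | univ => exact fun _ _ => ⟨1, one_pos, fun _ _ => mem_univ _⟩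
    | inter s₁ s₂ _ _ ih₁ ih₂ =>
      rintro v ⟨hv₁, hv₂⟩
      obtain ⟨ε₁, hε₁, h₁⟩ := ih₁ v hv₁
      obtain ⟨ε₂, hε₂, h₂⟩ := ih₂ v hv₂
      exact ⟨min ε₁ ε₂, lt_min hε₁ hε₂, fun w hw =>
        ⟨h₁ w (hw.trans_le (min_le_left _ _)), h₂ w (hw.trans_le (min_le_right _ _))⟩⟩
    | sUnion S _ ih =>
      rintro v ⟨s, hs, hv⟩
      obtain ⟨ε, hε, h⟩ := ih s hs v hv
      exact ⟨ε, hε, fun w hw => ⟨s, hs, h w hw⟩⟩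
  · obtain ⟨ε, hε, hball⟩ := h v hv
    refine ⟨{w | dL T v.toFun w.toFun < ε}, hball, ?_, by simpa [dL_self] using hε⟩
    exact TopologicalSpace.isOpen_generateFrom_of_mem ⟨v, ε, hε, rfl⟩

instance : PseudoMetricSpace (VPlus T) :=
  .ofDistTopology (fun v w => dL T v.toFun w.toFun) dL_self dL_comm dL_triangle isOpen_iff_dL

instance : BorelSpace (VPlus T) := ⟨rfl⟩

theorem dist_eq_sInf_levySet (v w : VPlus T) : dist v w = sInf (levySet v w) :=
  dL_eq_sInf_levySet v w

theorem lipschitzWith_add_right (u : VPlus T) : LipschitzWith 1 fun v : VPlus T => v + u :=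
  .of_dist_le_mul fun v w => by
    rw [NNReal.coe_one, one_mul, dist_eq_sInf_levySet, dist_eq_sInf_levySet]
    exact csInf_le_csInf levySet_bddBelow levySet_nonempty
      fun ε ⟨hε, h, h'⟩ => ⟨hε, h.add_right hε u, h'.add_right hε u⟩

theorem lowerSemicontinuous_toReal_apply (t : ℝ) :
    LowerSemicontinuous fun v : VPlus T => v.toReal t := by
  by_cases ht : t ∈ Ioo 0 T
  swap
  · simp only [toReal_of_notMem _ ht]
    exact lowerSemicontinuous_const
  intro v a ha
  obtain ⟨_, ⟨s, hs, rfl⟩, hvs, -⟩ :=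
    (v.isLUB_toReal ht).exists_between (show (v.toReal t + a) / 2 < v.toReal t by linarith)
  refine Metric.eventually_nhds_iff.2 ⟨min (t - s) ((v.toReal t - a) / 2),
    lt_min (by linarith [hs.2]) (by linarith), fun w hw => ?_⟩
  rw [dist_eq_sInf_levySet] at hw
  obtain ⟨ε, ⟨hε, -, hvw⟩, hεlt⟩ := exists_lt_of_csInf_lt levySet_nonempty hw
  have hεs : ε < t - s := hεlt.trans_le (min_le_left _ _)
  have hεa : ε < (v.toReal t - a) / 2 := hεlt.trans_le (min_le_right _ _)
  have hmono := v.monotoneOn_toReal ⟨hs.1, hs.2.trans ht.2⟩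
    ⟨by linarith [hs.1], by linarith [ht.2]⟩ (show s ≤ t - ε by linarith)
  linarith [hvw t ht (by linarith [hs.1])]

theorem measurable_toReal_apply (t : ℝ) : Measurable fun v : VPlus T => v.toReal t :=
  (lowerSemicontinuous_toReal_apply t).measurable

end VPlus

section MeanFieldShift

variable {Ω : Type*} [MeasurableSpace Ω] {P : Measure Ω} {φ : ℝ → ℝ} {C T : ℝ} {X : ℝ → Ω → ℝ}
  {g : ℝ → ℝ}

theorem integral_map_eq_integral_comp_add {L M : Ω → VPlus T} (hM : Measurable M)
    (hφ : Continuous φ) {t c : ℝ} (ht : t ∈ Ioo 0 T)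
    (hML : ∀ ω, (M ω).toFun t = (L ω).toFun t + c) :
    ∫ v, φ (v.toReal t) ∂P.map M = ∫ ω, φ ((L ω).toReal t + c) ∂P := by
  rw [integral_map hM.aemeasurable
    (hφ.comp_aestronglyMeasurable (VPlus.measurable_toReal_apply t).aestronglyMeasurable)]
  congr with ω
  rw [VPlus.toReal, hML ω, (L ω).toFun_eq_coe_toReal ht, ← WithBot.coe_add, WithBot.unbotD_coe]

variable [IsProbabilityMeasure P]

theorem monotoneOn_of_integral_comp_add_eq (hφ_mono : Monotone φ)
    (hφ_sub : StrictMono fun x => x - φ x) (hC : ∀ x, |φ x| ≤ C) (hX : ∀ t, Measurable (X t))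
    (hX_mono : ∀ ω, MonotoneOn (X · ω) (Ioo 0 T)) (hg : ∀ t, ∫ ω, φ (X t ω + g t) ∂P = g t) :
    MonotoneOn g (Ioo 0 T) := fun s hs t ht hst =>
  have hφ := (lipschitzWith_one_of_monotone_sub hφ_mono hφ_sub.monotone).continuous
  fixedPoint_le_of_le
    (integral_comp_add_le_of_le hφ hφ_mono hC (hX s) (hX t) fun ω => hX_mono ω hs ht hst)
    (strictMono_sub_integral_comp_add hφ hφ_sub hC (hX t)) (hg s) (hg t)

theorem continuousWithinAt_of_integral_comp_add_eq (hφ_mono : Monotone φ)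
    (hφ_sub : StrictMono fun x => x - φ x) (hC : ∀ x, |φ x| ≤ C) (hX : ∀ t, Measurable (X t))
    (hX_mono : ∀ ω, MonotoneOn (X · ω) (Ioo 0 T))
    (hX_cont : ∀ ω, ∀ t ∈ Ioo 0 T, ContinuousWithinAt (X · ω) (Iio t) t)
    (hg : ∀ t, ∫ ω, φ (X t ω + g t) ∂P = g t) {t : ℝ} (ht : t ∈ Ioo 0 T) :
    ContinuousWithinAt g (Iio t) t := by
  have hφ := (lipschitzWith_one_of_monotone_sub hφ_mono hφ_sub.monotone).continuous
  have hbdd : BddAbove (g '' Ioo 0 t) := ⟨C, forall_mem_image.2 fun s _ =>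
    (abs_le.1 (hg s ▸ abs_integral_comp_add_le hC (g s))).2⟩
  have hlim := ((monotoneOn_of_integral_comp_add_eq hφ_mono hφ_sub hC hX hX_mono hg).mono
    (Ioo_subset_Ioo_right ht.2.le)).tendsto_nhdsWithin_Ioo_left (nonempty_Ioo.2 ht.1) hbdd
  -- the limit from the left is a fixed point of the equation at time `t`, hence equals `g t`
  have hfix := eq_of_tendsto_of_fixedPoints
    (fun s => lipschitzWith_integral_comp_add hφ_mono hφ_sub hC (hX s)) hg hlim
    (tendsto_integral_comp_add hφ hC hX (fun ω => hX_cont ω t ht) _)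
  rwa [ContinuousWithinAt,
    ← (existsUnique_integral_comp_add_eq hφ_mono hφ_sub hC (hX t)).unique hfix (hg t)]

end MeanFieldShift

theorem unique_mean_field_fixed_point_general
    (T : ℝ)
    {Ω : Type*} [MeasurableSpace Ω] (P : Measure Ω) [IsProbabilityMeasure P]
    (L : Ω → VPlus T) (hL : Measurable L)
    (φ : ℝ → ℝ) (hφ_diff : Differentiable ℝ φ)
    (hφ_deriv : ∀ x : ℝ, deriv φ x ∈ Set.Ico (0 : ℝ) 1)
    (hφ_bdd : ∃ C : ℝ, ∀ x : ℝ, |φ x| ≤ C) :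
    ∃! m : Measure (VPlus T),
      IsProbabilityMeasure m ∧
      ∃ M : Ω → VPlus T, Measurable M ∧
        (∀ ω : Ω, ∀ t ∈ Set.Ioo 0 T,
          (M ω).toFun t =
            (L ω).toFun t +
              ((∫ v, φ (WithBot.unbotD 0 ((v : VPlus T).toFun t)) ∂m : ℝ) : WithBot ℝ)) ∧
        m = P.map M := by
  obtain ⟨C, hC⟩ := hφ_bdd
  have hφ_mono : Monotone φ := monotone_of_deriv_nonneg hφ_diff fun x => (hφ_deriv x).1
  have hφ_sub : StrictMono fun x => x - φ x := strictMono_of_deriv_pos fun x => by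
    rw [((hasDerivAt_id' x).fun_sub (hφ_diff x).hasDerivAt).deriv]
    linarith [(hφ_deriv x).2]
  have hX (t : ℝ) : Measurable fun ω => (L ω).toReal t :=
    (VPlus.measurable_toReal_apply t).comp hL
  have hF (t : ℝ) := existsUnique_integral_comp_add_eq (μ := P) hφ_mono hφ_sub hC (hX t)
  choose g hg using fun t => (hF t).exists
  let G : VPlus T := VPlus.ofReal g
    (monotoneOn_of_integral_comp_add_eq hφ_mono hφ_sub hC hX (fun ω => (L ω).monotoneOn_toReal) hg)
    fun t ht => continuousWithinAt_of_integral_comp_add_eq hφ_mono hφ_sub hC hX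
      (fun ω => (L ω).monotoneOn_toReal) (fun ω _ => (L ω).continuousWithinAt_toReal) hg ht
  have hM : Measurable fun ω => L ω + G :=
    (VPlus.lipschitzWith_add_right G).continuous.measurable.comp hL
  have hLG (ω : Ω) {t : ℝ} (ht : t ∈ Ioo 0 T) : (L ω + G).toFun t = (L ω).toFun t + g t := by
    rw [VPlus.toFun_add, VPlus.toFun_ofReal ht]
  have hlaw {M : Ω → VPlus T} (hM : Measurable M) {t c : ℝ} (ht : t ∈ Ioo 0 T) :=
    integral_map_eq_integral_comp_add (P := P) (L := L) hM hφ_diff.continuous (c := c) ht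
  refine ⟨P.map fun ω => L ω + G,
    ⟨Measure.isProbabilityMeasure_map hM.aemeasurable, _, hM, fun ω t ht => ?_, rfl⟩, ?_⟩
  · rw [hLG ω ht, ← (hlaw hM ht fun ω => hLG ω ht).trans (hg t)]
    rfl
  · rintro _ ⟨-, M, hM', hML, rfl⟩
    have hm (t : ℝ) (ht : t ∈ Ioo 0 T) : ∫ v, φ (v.toReal t) ∂P.map M = g t :=
      (hF t).unique (hlaw hM' ht (hML · t ht)).symm (hg t)
    congr 1
    funext ω
    exact VPlus.eq_of_eqOn fun t ht => by rw [hML ω t ht, hLG ω ht, ← hm t ht]; rfl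

/-- **Mean-field fixed point in the dimension-reduction setting (Theorem 2.10).**
There exists a unique Borel probability measure `m` on `(𝕍⁺, d_L)` that equals the
law of the `𝕍⁺`-valued random element `ω ↦ (t ↦ L(ω)(t) + m_t(φ))`, where
`m_t(φ) = ∫ φ(v(t)) m(dv)` for `t ∈ (0,T)` and the sum is `−∞` at `t = 0`
(the convention `(−∞) + c = −∞` is built into the addition of `WithBot ℝ`). -/
theorem unique_mean_field_fixed_point
    (T : ℝ) (hT : 0 < T)
    {Ω : Type*} [MeasurableSpace Ω] (P : Measure Ω) [IsProbabilityMeasure P]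
    (L : Ω → VPlus T) (hL : Measurable L)
    (φ : ℝ → ℝ) (hφ_diff : Differentiable ℝ φ)
    (hφ_deriv : ∀ x : ℝ, deriv φ x ∈ Set.Ico (0 : ℝ) 1)
    (hφ_bdd : ∃ C : ℝ, ∀ x : ℝ, |φ x| ≤ C) :
    ∃! m : Measure (VPlus T),
      IsProbabilityMeasure m ∧
      ∃ M : Ω → VPlus T, Measurable M ∧
        (∀ ω : Ω, ∀ t ∈ Set.Ioo 0 T,
          (M ω).toFun t =
            (L ω).toFun t +
              ((∫ v, φ (WithBot.unbotD 0 ((v : VPlus T).toFun t)) ∂m : ℝ) : WithBot ℝ)) ∧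
        m = P.map M :=
  unique_mean_field_fixed_point_general T P L hL φ hφ_diff hφ_deriv hφ_bdd

end
end

section
/- The map y ↦ E[φ(X + y)] has a unique fixed point: there exists exactly one y ∈ ℝ such that E[φ(X + y)] = y. -/
open MeasureTheory Filter Set

/-- **Unique fixed point of `y ↦ E[φ(X + y)]`.**
If `φ : ℝ → ℝ` is bounded and differentiable with `φ'(x) ∈ [0,1)` for all `x`, and
`X` is a real random variable on a probability space `(Ω, 𝓕, ℙ)`, then there is exactly
one `y ∈ ℝ` with `E[φ(X + y)] = y`. -/
theorem unique_fixed_point_of_expectation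
    {Ω : Type*} [MeasurableSpace Ω] (P : Measure Ω) [IsProbabilityMeasure P]
    (X : Ω → ℝ) (hX : Measurable X)
    (φ : ℝ → ℝ) (hφ_diff : Differentiable ℝ φ)
    (hφ_deriv : ∀ x : ℝ, deriv φ x ∈ Set.Ico (0 : ℝ) 1)
    (hφ_bdd : ∃ C : ℝ, ∀ x : ℝ, |φ x| ≤ C) :
    ∃! y : ℝ, ∫ ω, φ (X ω + y) ∂P = y := by
  obtain ⟨C, hC⟩ := hφ_bdd
  have hC0 : 0 ≤ C := le_trans (abs_nonneg _) (hC 0)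
  -- pointwise strict sub-Lipschitz estimate
  have hslope : ∀ a b : ℝ, a < b → φ b - φ a < b - a := by
    intro a b hab
    obtain ⟨c, _, hc⟩ := exists_deriv_eq_slope φ hab hφ_diff.continuous.continuousOn
      hφ_diff.differentiableOn
    have h1 : deriv φ c < 1 := (hφ_deriv c).2
    rw [hc] at h1
    have hba : 0 < b - a := sub_pos.mpr hab
    calc φ b - φ a = (φ b - φ a) / (b - a) * (b - a) := by field_simp
    _ < 1 * (b - a) := by exact mul_lt_mul_of_pos_right h1 hba
    _ = b - a := one_mul _
  have hint : ∀ y : ℝ, Integrable (fun ω => φ (X ω + y)) P := fun y =>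
    (integrable_const C).mono'
      ((hφ_diff.continuous.measurable.comp (hX.add_const y)).aestronglyMeasurable)
      (ae_of_all _ fun ω => by simpa [Real.norm_eq_abs] using hC (X ω + y))
  set F : ℝ → ℝ := fun y => ∫ ω, φ (X ω + y) ∂P with hF
  have hFbdd : ∀ y, |F y| ≤ C := by
    intro y
    rw [← Real.norm_eq_abs]
    calc ‖∫ ω, φ (X ω + y) ∂P‖ ≤ C * (P univ).toReal :=
      norm_integral_le_of_norm_le_const (ae_of_all _ fun ω => by
        simpa [Real.norm_eq_abs] using hC (X ω + y))
    _ = C := by simp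
  have hcont : Continuous F := by
    rw [continuous_iff_continuousAt]
    intro y0
    apply continuousAt_of_dominated (bound := fun _ => C)
    · exact Eventually.of_forall fun y => (hint y).aestronglyMeasurable
    · exact Eventually.of_forall fun y =>
        ae_of_all _ fun ω => by simpa [Real.norm_eq_abs] using hC (X ω + y)
    · exact integrable_const C
    · exact ae_of_all _ fun ω =>
        (hφ_diff.continuous.continuousAt).comp (by fun_prop)
  -- existence via IVT
  have hGcont : Continuous (fun y => F y - y) := hcont.sub continuous_id
  have hab : (-(C+1) : ℝ) ≤ C + 1 := by linarith
  have hmem : (0 : ℝ) ∈ Icc ((fun y => F y - y) (C+1)) ((fun y => F y - y) (-(C+1))) := by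
    constructor
    · have := (abs_le.mp (hFbdd (C+1))).2
      simp only
      linarith
    · have := (abs_le.mp (hFbdd (-(C+1)))).1
      simp only
      linarith
  obtain ⟨y, _, hy⟩ := intermediate_value_Icc' hab hGcont.continuousOn hmem
  have hyfix : F y = y := by linarith [sub_eq_zero.mp hy]
  -- uniqueness
  have huniq : ∀ u v : ℝ, F u = u → F v = v → u < v → False := by
    intro u v hu hv huv
    have hpos : ∀ ω, 0 < (v - u) - (φ (X ω + v) - φ (X ω + u)) := by
      intro ω
      have := hslope (X ω + u) (X ω + v) (by linarith)
      have h2 : (X ω + v) - (X ω + u) = v - u := by ring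
      linarith [h2 ▸ this]
    have hsub : Integrable (fun ω => φ (X ω + v) - φ (X ω + u)) P := (hint v).sub (hint u)
    have hinth : Integrable (fun ω => (v - u) - (φ (X ω + v) - φ (X ω + u))) P :=
      (integrable_const (v - u)).sub hsub
    have hzero : ∫ ω, ((v - u) - (φ (X ω + v) - φ (X ω + u))) ∂P = 0 := by
      rw [integral_sub (integrable_const _) hsub, integral_sub (hint v) (hint u)]
      simp only [hF] at hu hv
      simp [hu, hv]
    have hlt : 0 < ∫ ω, ((v - u) - (φ (X ω + v) - φ (X ω + u))) ∂P := by
      rw [integral_pos_iff_support_of_nonneg (fun ω => (hpos ω).le) hinth]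
      have : Function.support (fun ω => (v - u) - (φ (X ω + v) - φ (X ω + u))) = univ :=
        eq_univ_of_forall fun ω => (hpos ω).ne'
      rw [this]
      simp
    rw [hzero] at hlt
    exact lt_irrefl 0 hlt
  refine ⟨y, hyfix, fun z hz => ?_⟩
  rcases lt_trichotomy z y with h | h | h
  · exact absurd (huniq z y hz hyfix h) not_false
  · exact h
  · exact absurd (huniq y z hyfix hz h) not_false
end

section
/- If X₁ ≤ X₂ ℙ-almost surely, then y₁ ≤ y₂, where for i = 1,2, yᵢ denotes the unique real number satisfying E[φ(Xᵢ + yᵢ)] = yᵢ. In particular, if (L_t)_{t∈[0,T]} is a process with nondecreasing paths, the corresponding fixed points y*_t of y ↦ E[φ(L_t + y)] are nondecreasing in t. -/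
open MeasureTheory Filter Set

/-!
The map `y ↦ y - E[φ(X + y)]` is strictly increasing, because `x ↦ x - φ x` is (as `φ' < 1`),
and it is antitone in `X`, because `φ` is monotone (as `φ' ≥ 0`). If `y₂ < y₁` were fixed points
for `X₁ ≤ X₂`, then `0 = y₂ - E[φ(X₂ + y₂)] < y₁ - E[φ(X₂ + y₁)] ≤ y₁ - E[φ(X₁ + y₁)] = 0`.
-/

lemma integral_lt_integral_of_forall_lt {α : Type*} [MeasurableSpace α] {μ : Measure α}
    [NeZero μ] {f g : α → ℝ} (hf : Integrable f μ) (hg : Integrable g μ)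
    (hfg : ∀ x, f x < g x) : ∫ x, f x ∂μ < ∫ x, g x ∂μ := by
  have hsupport : Function.support (fun x => g x - f x) = univ :=
    eq_univ_of_forall fun x => (sub_pos.2 (hfg x)).ne'
  have hpos : 0 < ∫ x, (g x - f x) ∂μ := by
    rw [integral_pos_iff_support_of_nonneg (fun x => (sub_pos.2 (hfg x)).le) (hg.sub hf),
      hsupport]
    exact Measure.measure_univ_pos.2 (NeZero.ne μ)
  rwa [integral_sub hg hf, sub_pos] at hpos

lemma strictMono_sub_of_deriv_lt_one {φ : ℝ → ℝ} (hφ : Differentiable ℝ φ)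
    (hφ' : ∀ x, deriv φ x < 1) : StrictMono fun x => x - φ x :=
  strictMono_of_deriv_pos fun x => by
    rw [((hasDerivAt_id' x).fun_sub (hφ x).hasDerivAt).deriv]
    linarith [hφ' x]

section

variable {Ω : Type*} [MeasurableSpace Ω] {P : Measure Ω} {φ : ℝ → ℝ}

lemma integrable_comp_add_const_of_bounded [IsFiniteMeasure P] (hφ : Measurable φ)
    (hφ_bdd : ∃ C, ∀ x, |φ x| ≤ C) {X : Ω → ℝ} (hX : Measurable X) (y : ℝ) :
    Integrable (fun ω => φ (X ω + y)) P := by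
  obtain ⟨C, hC⟩ := hφ_bdd
  exact .of_bound (hφ.comp (hX.add_const y)).aestronglyMeasurable C (ae_of_all _ fun ω => hC _)

lemma strictMono_sub_integral_comp_add_s6 [IsProbabilityMeasure P]
    (hφ : StrictMono fun x => x - φ x) {X : Ω → ℝ}
    (hint : ∀ y, Integrable (fun ω => φ (X ω + y)) P) :
    StrictMono fun y => y - ∫ ω, φ (X ω + y) ∂P := by
  intro y y' hyy'
  have hpull_in : ∀ z, z - ∫ ω, φ (X ω + z) ∂P = ∫ ω, (z - φ (X ω + z)) ∂P := fun z => by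
    rw [integral_sub (integrable_const z) (hint z), integral_const, probReal_univ, one_smul]
  simp only [hpull_in]
  refine integral_lt_integral_of_forall_lt ((integrable_const y).sub (hint y))
    ((integrable_const y').sub (hint y')) fun ω => ?_
  have hpoint := hφ (add_lt_add_right hyy' (X ω))
  simp only at hpoint
  linarith

lemma fixedPoint_le_of_ae_le [IsProbabilityMeasure P] (hφ : Monotone φ)
    (hφ_sub : StrictMono fun x => x - φ x) {X₁ X₂ : Ω → ℝ}
    (hint₁ : ∀ y, Integrable (fun ω => φ (X₁ ω + y)) P)
    (hint₂ : ∀ y, Integrable (fun ω => φ (X₂ ω + y)) P) (hle : X₁ ≤ᵐ[P] X₂) {y₁ y₂ : ℝ}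
    (h₁ : ∫ ω, φ (X₁ ω + y₁) ∂P = y₁) (h₂ : ∫ ω, φ (X₂ ω + y₂) ∂P = y₂) : y₁ ≤ y₂ := by
  by_contra! hlt
  have hgap := strictMono_sub_integral_comp_add_s6 hφ_sub hint₂ hlt
  have hcomp : ∫ ω, φ (X₁ ω + y₁) ∂P ≤ ∫ ω, φ (X₂ ω + y₁) ∂P :=
    integral_mono_ae (hint₁ y₁) (hint₂ y₁) (hle.mono fun ω hω => hφ (by linarith))
  simp only at hgap
  linarith

end

/-- **Monotonicity of the fixed points of `y ↦ E[φ(X + y)]`.**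
If `φ : ℝ → ℝ` is bounded and differentiable with `φ'(x) ∈ [0,1)` for all `x`, then:
(1) whenever `X₁ ≤ X₂` a.s. and `y₁, y₂` are the (unique) fixed points of
`y ↦ E[φ(Xᵢ + y)]`, one has `y₁ ≤ y₂`; and (2) in particular, for a process
`(L_t)_{t ∈ [0,T]}` with nondecreasing paths, the fixed points `y*_t` of
`y ↦ E[φ(L_t + y)]` are nondecreasing in `t`. -/
theorem fixed_points_monotone
    {Ω : Type*} [MeasurableSpace Ω] (P : Measure Ω) [IsProbabilityMeasure P]
    (φ : ℝ → ℝ) (hφ_diff : Differentiable ℝ φ)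
    (hφ_deriv : ∀ x : ℝ, deriv φ x ∈ Set.Ico (0 : ℝ) 1)
    (hφ_bdd : ∃ C : ℝ, ∀ x : ℝ, |φ x| ≤ C) :
    (∀ X₁ X₂ : Ω → ℝ, Measurable X₁ → Measurable X₂ →
      (∀ᵐ ω ∂P, X₁ ω ≤ X₂ ω) →
      ∀ y₁ y₂ : ℝ, (∫ ω, φ (X₁ ω + y₁) ∂P = y₁) → (∫ ω, φ (X₂ ω + y₂) ∂P = y₂) →
        y₁ ≤ y₂) ∧
    (∀ T : ℝ, 0 < T → ∀ L : ℝ → Ω → ℝ, (∀ t, Measurable (L t)) →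
      (∀ ω, MonotoneOn (fun t => L t ω) (Set.Icc 0 T)) →
      ∀ ystar : ℝ → ℝ, (∀ t ∈ Set.Icc (0 : ℝ) T, ∫ ω, φ (L t ω + ystar t) ∂P = ystar t) →
        MonotoneOn ystar (Set.Icc 0 T)) := by
  have hmono : Monotone φ := monotone_of_deriv_nonneg hφ_diff fun x => (hφ_deriv x).1
  have hsub := strictMono_sub_of_deriv_lt_one hφ_diff fun x => (hφ_deriv x).2
  have hint {X : Ω → ℝ} (hX : Measurable X) :=
    integrable_comp_add_const_of_bounded (P := P) hφ_diff.continuous.measurable hφ_bdd hX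
  have hfixed : ∀ X₁ X₂ : Ω → ℝ, Measurable X₁ → Measurable X₂ → (∀ᵐ ω ∂P, X₁ ω ≤ X₂ ω) →
      ∀ y₁ y₂ : ℝ, (∫ ω, φ (X₁ ω + y₁) ∂P = y₁) → (∫ ω, φ (X₂ ω + y₂) ∂P = y₂) → y₁ ≤ y₂ :=
    fun _ _ hX₁ hX₂ hle _ _ h₁ h₂ =>
      fixedPoint_le_of_ae_le hmono hsub (hint hX₁) (hint hX₂) hle h₁ h₂
  refine ⟨hfixed, fun T _ L hL hLmono ystar hystar s hs t ht hst => ?_⟩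
  exact hfixed (L s) (L t) (hL s) (hL t) (ae_of_all _ fun ω => hLmono ω hs ht hst)
    (ystar s) (ystar t) (hystar s hs) (hystar t ht)
end

section
/- Suppose f¹(t,ω,ℓ) ≤ f²(t,ω,ℓ) for all (t,ω,ℓ), and let ℓ¹, ℓ² be 𝓕_τ-measurable real-valued random variables such that ω ↦ ∫_τ^σ fⁱ(s, ℓⁱ(ω))(ω) ds is integrable for i = 1,2 and E[∫_τ^σ f¹(s, ℓ¹) ds | 𝓕_τ] ≥ E[∫_τ^σ f²(s, ℓ²) ds | 𝓕_τ] ℙ-almost surely. Then ℓ¹ ≥ ℓ² ℙ-almost surely. -/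
/-!
On the `𝓕_τ`-measurable event `A = {ℓ¹ < ℓ²}`, strict monotonicity of `f¹` and `f¹ ≤ f²` give
`∫_τ^σ f¹(s, ℓ¹) ds < ∫_τ^σ f²(s, ℓ²) ds` pathwise, because `τ < σ`. Integrating the assumed
inequality of conditional expectations over `A` yields the opposite inequality between the integrals
over `A`, so `ℙ(A) = 0`.
-/

open MeasureTheory Filter Set

noncomputable section

variable {Ω : Type*} {m0 : MeasurableSpace Ω}

/-- The standing assumptions on a generator `f`: for each `(t,ω)`, `ℓ ↦ f(t,ω,ℓ)` is
continuous and strictly increasing, and for each `ℓ` the process `(t,ω) ↦ f(t,ω,ℓ)`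
is progressively measurable with `E[∫₀ᵀ |f(t,ℓ)| dt] < ∞`. -/
def IsNiceGenerator (P : Measure Ω) [SFinite P] (F : Filtration ℝ m0) (T : ℝ)
    (f : ℝ → Ω → ℝ → ℝ) : Prop :=
  (∀ t ω, StrictMono (f t ω)) ∧ (∀ t ω, Continuous (f t ω)) ∧
  (∀ ℓ : ℝ, ProgMeasurable F (fun t ω => f t ω ℓ)) ∧
  (∀ ℓ : ℝ, Integrable (fun p : ℝ × Ω => f p.1 p.2 ℓ)
      ((volume.restrict (Set.Icc 0 T)).prod P))

theorem MeasureTheory.IsStronglyProgressive.aestronglyMeasurable_restrict_Iic {β : Type*}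
    [TopologicalSpace β] {F : Filtration ℝ m0} {u : ℝ → Ω → β} (hu : IsStronglyProgressive F u)
    (μ : Measure ℝ) (T : ℝ) (ω : Ω) :
    AEStronglyMeasurable (fun s => u s ω) (μ.restrict (Iic T)) := by
  have hclip : Measurable[_, Subtype.instMeasurableSpace.prod (F T)]
      fun s : ℝ => ((⟨min s T, min_le_right s T⟩ : Iic T), ω) :=
    (measurable_id.min measurable_const).subtype_mk.prodMk measurable_const
  refine ((hu T).comp_measurable hclip).aestronglyMeasurable.congr ?_
  filter_upwards [ae_restrict_mem measurableSet_Iic] with s hs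
  simp only [Function.comp_apply, min_eq_left hs.out]

/-- Sandwiched between the levels `⌊ℓ⌋` and `⌈ℓ⌉`, the section at a random level `ℓ` inherits the
integrability of the sections at integer levels, which holds for a.e. `ω` by Fubini. -/
theorem ae_integrableOn_Icc_at_level {P : Measure Ω} [SFinite P] {F : Filtration ℝ m0} {T : ℝ}
    {f : ℝ → Ω → ℝ → ℝ} (hmono : ∀ t ω, Monotone (f t ω))
    (hprog : ∀ ℓ, IsStronglyProgressive F fun t ω => f t ω ℓ)
    (hint : ∀ ℓ, Integrable (fun p : ℝ × Ω => f p.1 p.2 ℓ) ((volume.restrict (Icc 0 T)).prod P))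
    (ℓ : Ω → ℝ) :
    ∀ᵐ ω ∂P, IntegrableOn (fun s => f s ω (ℓ ω)) (Icc 0 T) := by
  have hsections : ∀ᵐ ω ∂P, ∀ n : ℤ, IntegrableOn (fun s => f s ω n) (Icc 0 T) :=
    ae_all_iff.2 fun n => (hint n).prod_left_ae
  filter_upwards [hsections] with ω hω
  have hmeas : AEStronglyMeasurable (fun s => f s ω (ℓ ω)) (volume.restrict (Icc 0 T)) :=
    ((hprog (ℓ ω)).aestronglyMeasurable_restrict_Iic volume T ω).mono_measure
      (Measure.restrict_mono Icc_subset_Iic_self le_rfl)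
  exact integrable_of_le_of_le hmeas
    (ae_of_all _ fun s => hmono s ω (Int.floor_le (ℓ ω)))
    (ae_of_all _ fun s => hmono s ω (Int.le_ceil (ℓ ω))) (hω _) (hω _)

theorem intervalIntegral_lt_of_level_lt {g₁ g₂ : ℝ → ℝ → ℝ} {a b ℓ₁ ℓ₂ : ℝ} (hab : a < b)
    (hg₁ : ∀ s, StrictMono (g₁ s)) (hg₁₂ : ∀ s ℓ, g₁ s ℓ ≤ g₂ s ℓ) (hℓ : ℓ₁ < ℓ₂)
    (hi₁ : IntervalIntegrable (fun s => g₁ s ℓ₁) volume a b)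
    (hi₂ : IntervalIntegrable (fun s => g₂ s ℓ₂) volume a b) :
    ∫ s in a..b, g₁ s ℓ₁ < ∫ s in a..b, g₂ s ℓ₂ := by
  rw [← sub_pos, ← intervalIntegral.integral_sub hi₂ hi₁]
  refine intervalIntegral.intervalIntegral_pos_of_pos_on (hi₂.sub hi₁) (fun s _ => ?_) hab
  exact sub_pos.2 ((hg₁ s hℓ).trans_le (hg₁₂ s ℓ₂))

theorem measure_eq_zero_of_setIntegral_le_of_ae_lt {α : Type*} {mα : MeasurableSpace α}
    {μ : Measure α} {X Y : α → ℝ} {A : Set α} (hA : MeasurableSet A)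
    (hX : IntegrableOn X A μ) (hY : IntegrableOn Y A μ) (hlt : ∀ᵐ a ∂μ, a ∈ A → X a < Y a)
    (hle : ∫ a in A, Y a ∂μ ≤ ∫ a in A, X a ∂μ) :
    μ A = 0 := by
  have hpos : ∀ᵐ a ∂μ.restrict A, 0 < (Y - X) a :=
    (ae_restrict_iff' hA).2 (hlt.mono fun a h ha => sub_pos.2 (h ha))
  have hnonneg : 0 ≤ᵐ[μ.restrict A] Y - X := hpos.mono fun _ h => h.le
  have hzero : Y - X =ᵐ[μ.restrict A] 0 := by
    refine (integral_eq_zero_iff_of_nonneg_ae hnonneg (hY.sub hX)).1 (le_antisymm ?_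
      (integral_nonneg_of_ae hnonneg))
    rw [Pi.sub_def, integral_sub hY hX]
    linarith
  refine Measure.restrict_eq_zero.1 (ae_eq_bot.1 (eventually_false_iff_eq_bot.1 ?_))
  filter_upwards [hpos, hzero] with a hpos_a hzero_a
  exact hpos_a.ne' hzero_a

theorem measure_eq_zero_of_condExp_le_of_ae_lt {m : MeasurableSpace Ω} {μ : Measure[m0] Ω}
    [IsFiniteMeasure μ] (hm : m ≤ m0) {X Y : Ω → ℝ} (hX : Integrable X μ) (hY : Integrable Y μ)
    (hcond : ∀ᵐ ω ∂μ, μ[Y | m] ω ≤ μ[X | m] ω) {A : Set Ω} (hA : MeasurableSet[m] A)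
    (hlt : ∀ᵐ ω ∂μ, ω ∈ A → X ω < Y ω) :
    μ A = 0 := by
  refine measure_eq_zero_of_setIntegral_le_of_ae_lt (hm A hA) hX.integrableOn hY.integrableOn hlt ?_
  calc ∫ ω in A, Y ω ∂μ = ∫ ω in A, (μ[Y | m]) ω ∂μ := (setIntegral_condExp hm hY hA).symm
    _ ≤ ∫ ω in A, (μ[X | m]) ω ∂μ :=
      setIntegral_mono_ae integrable_condExp.integrableOn integrable_condExp.integrableOn hcond
    _ = ∫ ω in A, X ω ∂μ := setIntegral_condExp hm hX hA

theorem comparison_of_levels_general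
    (P : Measure Ω) [IsProbabilityMeasure P]
    (F : Filtration ℝ m0) (T : ℝ)
    (τ σ : Ω → ℝ) (hτ : IsStoppingTime F (fun ω => (τ ω : WithTop ℝ)))
    (hτT : ∀ ω, τ ω ∈ Set.Icc 0 T) (hσT : ∀ ω, σ ω ∈ Set.Icc 0 T)
    (hlt : ∀ᵐ ω ∂P, τ ω < σ ω)
    (f₁ f₂ : ℝ → Ω → ℝ → ℝ)
    (hf₁ : IsNiceGenerator P F T f₁) (hf₂ : IsNiceGenerator P F T f₂)
    (hf₁₂ : ∀ t ω ℓ, f₁ t ω ℓ ≤ f₂ t ω ℓ)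
    (ℓ₁ ℓ₂ : Ω → ℝ)
    (hℓ₁ : Measurable[hτ.measurableSpace] ℓ₁) (hℓ₂ : Measurable[hτ.measurableSpace] ℓ₂)
    (hint₁ : Integrable (fun ω => ∫ s in (τ ω)..(σ ω), f₁ s ω (ℓ₁ ω)) P)
    (hint₂ : Integrable (fun ω => ∫ s in (τ ω)..(σ ω), f₂ s ω (ℓ₂ ω)) P)
    (hcond : ∀ᵐ ω ∂P,
      (P[(fun ω' => ∫ s in (τ ω')..(σ ω'), f₂ s ω' (ℓ₂ ω')) | hτ.measurableSpace]) ω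
        ≤ (P[(fun ω' => ∫ s in (τ ω')..(σ ω'), f₁ s ω' (ℓ₁ ω')) | hτ.measurableSpace]) ω) :
    ∀ᵐ ω ∂P, ℓ₂ ω ≤ ℓ₁ ω := by
  obtain ⟨hmono₁, -, hprog₁, hI₁⟩ := hf₁
  obtain ⟨hmono₂, -, hprog₂, hI₂⟩ := hf₂
  have hpathwise : ∀ᵐ ω ∂P, ℓ₁ ω < ℓ₂ ω →
      ∫ s in (τ ω)..(σ ω), f₁ s ω (ℓ₁ ω) < ∫ s in (τ ω)..(σ ω), f₂ s ω (ℓ₂ ω) := by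
    filter_upwards [hlt,
      ae_integrableOn_Icc_at_level (fun t ω => (hmono₁ t ω).monotone) hprog₁ hI₁ ℓ₁,
      ae_integrableOn_Icc_at_level (fun t ω => (hmono₂ t ω).monotone) hprog₂ hI₂ ℓ₂]
      with ω hτσ hi₁ hi₂ hℓ
    have hsub : uIcc (τ ω) (σ ω) ⊆ Icc 0 T := uIcc_subset_Icc (hτT ω) (hσT ω)
    exact intervalIntegral_lt_of_level_lt hτσ (hmono₁ · ω) (hf₁₂ · ω) hℓ
      (hi₁.mono_set hsub).intervalIntegrable (hi₂.mono_set hsub).intervalIntegrable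
  have hnull : P {ω | ℓ₁ ω < ℓ₂ ω} = 0 :=
    measure_eq_zero_of_condExp_le_of_ae_lt hτ.measurableSpace_le hint₁ hint₂ hcond
      (measurableSet_lt hℓ₁ hℓ₂) hpathwise
  simpa only [ae_iff, not_le] using hnull

/-- **Comparison of the implicit levels (from the proof of Theorem 2.7).**
Let `τ ≤ σ` be `[0,T]`-valued stopping times with `τ < σ` a.s., and let `f¹ ≤ f²`
pointwise. If `ℓ¹, ℓ²` are `𝓕_τ`-measurable random variables with
`E[∫_τ^σ f¹(s,ℓ¹) ds | 𝓕_τ] ≥ E[∫_τ^σ f²(s,ℓ²) ds | 𝓕_τ]` a.s., then `ℓ¹ ≥ ℓ²` a.s. -/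
theorem comparison_of_levels
    (P : Measure Ω) [IsProbabilityMeasure P]
    (F : Filtration ℝ m0) (T : ℝ) (hT : 0 < T)
    (husual_complete : ∀ s : Set Ω, MeasurableSet s → P s = 0 → MeasurableSet[F 0] s)
    (husual_right : ∀ t : ℝ, F t = ⨅ s ∈ Set.Ioi t, F s)
    (τ σ : Ω → ℝ) (hτ : IsStoppingTime F (fun ω => (τ ω : WithTop ℝ)))
    (hσ : IsStoppingTime F (fun ω => (σ ω : WithTop ℝ)))
    (hτT : ∀ ω, τ ω ∈ Set.Icc 0 T) (hσT : ∀ ω, σ ω ∈ Set.Icc 0 T)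
    (hle : ∀ ω, τ ω ≤ σ ω) (hlt : ∀ᵐ ω ∂P, τ ω < σ ω)
    (f₁ f₂ : ℝ → Ω → ℝ → ℝ)
    (hf₁ : IsNiceGenerator P F T f₁) (hf₂ : IsNiceGenerator P F T f₂)
    (hf₁₂ : ∀ t ω ℓ, f₁ t ω ℓ ≤ f₂ t ω ℓ)
    (ℓ₁ ℓ₂ : Ω → ℝ)
    (hℓ₁ : Measurable[hτ.measurableSpace] ℓ₁) (hℓ₂ : Measurable[hτ.measurableSpace] ℓ₂)
    (hint₁ : Integrable (fun ω => ∫ s in (τ ω)..(σ ω), f₁ s ω (ℓ₁ ω)) P)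
    (hint₂ : Integrable (fun ω => ∫ s in (τ ω)..(σ ω), f₂ s ω (ℓ₂ ω)) P)
    (hcond : ∀ᵐ ω ∂P,
      (P[(fun ω' => ∫ s in (τ ω')..(σ ω'), f₂ s ω' (ℓ₂ ω')) | hτ.measurableSpace]) ω
        ≤ (P[(fun ω' => ∫ s in (τ ω')..(σ ω'), f₁ s ω' (ℓ₁ ω')) | hτ.measurableSpace]) ω) :
    ∀ᵐ ω ∂P, ℓ₂ ω ≤ ℓ₁ ω :=
  comparison_of_levels_general P F T τ σ hτ hτT hσT hlt f₁ f₂ hf₁ hf₂ hf₁₂ ℓ₁ ℓ₂ hℓ₁ hℓ₂ hint₁ hint₂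
    hcond

end
end

section
/- Let v_n, v ∈ 𝕍⁺ (n ∈ ℕ) be strictly increasing on (0,T) with d_L(v_n, v) → 0 as n → ∞. For w ∈ 𝕍⁺ and ℓ ∈ ℝ define the hitting time τ^w_ℓ := inf{t ∈ [0,T) : w(t) ≥ ℓ}, with inf ∅ := T. Then for every ℓ ∈ ℝ, τ^{v_n}_ℓ → τ^{v}_ℓ as n → ∞. -/
open MeasureTheory Filter Set Topology

noncomputable section

/-- The hitting time `τ^w_ℓ = inf {t ∈ [0,T) : w(t) ≥ ℓ}`, with `inf ∅ = T`. -/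
noncomputable def hitTime (T : ℝ) (w : ℝ → WithBot ℝ) (ℓ : ℝ) : ℝ :=
  sInf (insert T {t : ℝ | 0 ≤ t ∧ t < T ∧ (ℓ : WithBot ℝ) ≤ w t})

/-- **Convergence of hitting times for strictly increasing elements of `𝕍⁺`.**
If `vₙ, v ∈ 𝕍⁺` are strictly increasing on `(0,T)` and `d_L(vₙ, v) → 0`, then
`τ^{vₙ}_ℓ → τ^{v}_ℓ` for every level `ℓ ∈ ℝ`. -/
theorem hitting_time_convergence (T : ℝ) (hT : 0 < T)
    (v : ℝ → WithBot ℝ) (vn : ℕ → ℝ → WithBot ℝ)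
    (hv : InVPlus T v) (hvn : ∀ n, InVPlus T (vn n))
    (hv_strict : ∀ s t : ℝ, 0 < s → s < t → t < T → v s < v t)
    (hvn_strict : ∀ n, ∀ s t : ℝ, 0 < s → s < t → t < T → vn n s < vn n t)
    (hconv : Tendsto (fun n => dL T (vn n) v) atTop (nhds 0)) :
    ∀ ℓ : ℝ, Tendsto (fun n => hitTime T (vn n) ℓ) atTop (nhds (hitTime T v ℓ)) := by
  intro ℓ
  set τ := hitTime T v ℓ with hτdef
  clear_value τ
  -- basic facts about the hitting-time sets
  have hSne : ∀ w : ℝ → WithBot ℝ,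
      (insert T {t : ℝ | 0 ≤ t ∧ t < T ∧ (ℓ : WithBot ℝ) ≤ w t}).Nonempty :=
    fun w => ⟨T, Set.mem_insert _ _⟩
  have hSbdd : ∀ w : ℝ → WithBot ℝ,
      BddBelow (insert T {t : ℝ | 0 ≤ t ∧ t < T ∧ (ℓ : WithBot ℝ) ≤ w t}) := by
    intro w
    refine ⟨0, fun x hx => ?_⟩
    rcases hx with rfl | hx
    · exact hT.le
    · exact hx.1
  have hhit_nonneg : ∀ w : ℝ → WithBot ℝ, 0 ≤ hitTime T w ℓ := by
    intro w
    refine le_csInf (hSne w) fun x hx => ?_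
    rcases hx with rfl | hx
    · exact hT.le
    · exact hx.1
  have hhit_le_T : ∀ w : ℝ → WithBot ℝ, hitTime T w ℓ ≤ T :=
    fun w => csInf_le (hSbdd w) (Set.mem_insert _ _)
  have hτ0 : 0 ≤ τ := hτdef ▸ hhit_nonneg v
  have hτT : τ ≤ T := hτdef ▸ hhit_le_T v
  -- real values on (0,T)
  have hreal : ∀ (w : ℝ → WithBot ℝ), InVPlus T w → ∀ t : ℝ, t ∈ Set.Ioo 0 T →
      ∃ x : ℝ, w t = (x : WithBot ℝ) := by
    intro w hw t ht
    rcases WithBot.ne_bot_iff_exists.mp (hw.2.2.1 t ht) with ⟨x, hx⟩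
    exact ⟨x, hx.symm⟩
  -- F2 : v hits ℓ strictly after τ
  have hF2 : ∀ t : ℝ, τ < t → t < T → (ℓ : WithBot ℝ) ≤ v t := by
    intro t ht htT
    rw [hτdef] at ht
    obtain ⟨s, hs, hst⟩ := exists_lt_of_csInf_lt (hSne v) ht
    rcases hs with rfl | ⟨hs0, _, hsl⟩
    · exact absurd hst (not_lt.2 htT.le)
    · exact hsl.trans (hv.2.1 s t hs0 hst.le htT)
  -- F3 : any hitting point is ≥ τ
  have hF3 : ∀ t : ℝ, 0 ≤ t → t < T → (ℓ : WithBot ℝ) ≤ v t → τ ≤ t :=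
    fun t h0 hT' hl => hτdef ▸ csInf_le (hSbdd v) (Set.mem_insert_of_mem _ ⟨h0, hT', hl⟩)
  -- key : eventually there exists ε' < ε0 witnessing the Lévy-metric bound
  have hkey : ∀ ε0 : ℝ, 0 < ε0 → ∀ᶠ n in atTop, ∃ ε' : ℝ, 0 ≤ ε' ∧ ε' < ε0 ∧
      ∀ t : ℝ, t ∈ Set.Ioo 0 T →
        ((vn n) (max (t - ε') 0)).map (fun x => x - ε') ≤ v t ∧
        (v (max (t - ε') 0)).map (fun x => x - ε') ≤ (vn n) t := by
    intro ε0 hε0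
    have h1 : ∀ᶠ n in atTop, dL T (vn n) v < ε0 := hconv.eventually_lt_const hε0
    filter_upwards [h1] with n hn
    have hTmem : T ∈ {ε : ℝ | 0 ≤ ε ∧ ∀ t : ℝ, t ∈ Set.Ioo 0 T →
        ((vn n) (max (t - ε) 0)).map (fun x => x - ε) ≤ v t ∧
        (v (max (t - ε) 0)).map (fun x => x - ε) ≤ (vn n) t} := by
      refine ⟨hT.le, fun t ht => ?_⟩
      have hmax : max (t - T) 0 = 0 := max_eq_right (by linarith [ht.2])
      rw [hmax]
      have h0 : (0:ℝ) ∉ Set.Ioo 0 T := by simp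
      constructor
      · rw [(hvn n).1 0 h0]; exact bot_le
      · rw [hv.1 0 h0]; exact bot_le
    obtain ⟨ε', hε'mem, hε'lt⟩ := exists_lt_of_csInf_lt ⟨T, hTmem⟩ hn
    exact ⟨ε', hε'mem.1, hε'lt, hε'mem.2⟩
  -- upper bound : eventually hitTime (vn n) < τ + δ
  have hup : ∀ δ : ℝ, 0 < δ → ∀ᶠ n in atTop, hitTime T (vn n) ℓ < τ + δ := by
    intro δ hδ
    by_cases hc : τ + δ / 2 < T
    · set t1 := τ + δ / 8 with ht1def
      set t2 := τ + δ / 4 with ht2def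
      set t3 := τ + δ / 2 with ht3def
      clear_value t1 t2 t3
      have ht1 : t1 ∈ Set.Ioo 0 T := ⟨by linarith, by linarith⟩
      have ht2 : t2 ∈ Set.Ioo 0 T := ⟨by linarith, by linarith⟩
      have ht3 : t3 ∈ Set.Ioo 0 T := ⟨by linarith, by linarith⟩
      have hl1 : (ℓ : WithBot ℝ) ≤ v t1 := hF2 t1 (by linarith) ht1.2
      have hlt : v t1 < v t2 := hv_strict t1 t2 ht1.1 (by linarith) ht2.2
      obtain ⟨a, ha⟩ := hreal v hv t2 ht2
      have haℓ : ℓ < a := by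
        have : (ℓ : WithBot ℝ) < (a : WithBot ℝ) := lt_of_le_of_lt hl1 (ha ▸ hlt)
        exact_mod_cast this
      have hε0 : 0 < min (δ / 4) (a - ℓ) := lt_min (by linarith) (by linarith)
      filter_upwards [hkey _ hε0] with n hn
      obtain ⟨ε', hε'0, hε'lt, hprop⟩ := hn
      have hε'δ : ε' < δ / 4 := lt_of_lt_of_le hε'lt (min_le_left _ _)
      have hε'a : ε' < a - ℓ := lt_of_lt_of_le hε'lt (min_le_right _ _)
      have hmax : max (t3 - ε') 0 = t3 - ε' := max_eq_left (by linarith)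
      have hmono : v t2 ≤ v (t3 - ε') :=
        hv.2.1 t2 (t3 - ε') (by linarith) (by linarith) (by linarith)
      have hioo : t3 - ε' ∈ Set.Ioo 0 T := ⟨by linarith, by linarith⟩
      obtain ⟨c, hcv⟩ := hreal v hv (t3 - ε') hioo
      have hca : a ≤ c := by
        rw [ha, hcv] at hmono; exact_mod_cast hmono
      have h3 := (hprop t3 ht3).2
      rw [hmax, hcv] at h3
      simp only [WithBot.map_coe] at h3
      have hℓc : (ℓ : WithBot ℝ) ≤ vn n t3 := by
        refine le_trans ?_ h3
        exact_mod_cast (by linarith : ℓ ≤ c - ε')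
      have hle : hitTime T (vn n) ℓ ≤ t3 :=
        csInf_le (hSbdd (vn n)) (Set.mem_insert_of_mem _ ⟨by linarith, ht3.2, hℓc⟩)
      linarith
    · push_neg at hc
      refine Eventually.of_forall fun n => lt_of_le_of_lt (hhit_le_T (vn n)) ?_
      linarith
  -- lower bound : eventually τ - δ < hitTime (vn n)
  have hlo : ∀ δ : ℝ, 0 < δ → ∀ᶠ n in atTop, τ - δ < hitTime T (vn n) ℓ := by
    intro δ hδ
    by_cases hc : δ / 2 < τ
    · set s1 := τ - δ / 2 with hs1def
      set s2 := τ - δ / 4 with hs2def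
      clear_value s1 s2
      have hs2 : s2 ∈ Set.Ioo 0 T := ⟨by linarith, by linarith⟩
      have hb : v s2 < (ℓ : WithBot ℝ) := by
        by_contra h
        push_neg at h
        have := hF3 s2 (by linarith) hs2.2 h
        linarith
      obtain ⟨b, hbval⟩ := hreal v hv s2 hs2
      have hbℓ : b < ℓ := by
        rw [hbval] at hb; exact_mod_cast hb
      have hε0 : 0 < min (δ / 8) (ℓ - b) := lt_min (by linarith) (by linarith)
      filter_upwards [hkey _ hε0] with n hn
      obtain ⟨ε', hε'0, hε'lt, hprop⟩ := hn
      have hε'δ : ε' < δ / 8 := lt_of_lt_of_le hε'lt (min_le_left _ _)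
      have hε'b : ε' < ℓ - b := lt_of_lt_of_le hε'lt (min_le_right _ _)
      by_contra h
      push_neg at h
      obtain ⟨s, hs, hss⟩ := exists_lt_of_csInf_lt (hSne (vn n))
        (lt_of_le_of_lt h (by linarith : τ - δ < s1))
      rcases hs with rfl | ⟨hs0, hsT, hsl⟩
      · linarith
      · have hple : s ≤ s2 - ε' := by linarith
        have hmono : vn n s ≤ vn n (s2 - ε') :=
          (hvn n).2.1 s (s2 - ε') hs0 hple (by linarith)
        have hℓle : (ℓ : WithBot ℝ) ≤ vn n (s2 - ε') := hsl.trans hmono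
        have hioo : s2 - ε' ∈ Set.Ioo 0 T := ⟨by linarith, by linarith⟩
        obtain ⟨c, hcv⟩ := hreal (vn n) (hvn n) (s2 - ε') hioo
        have hℓc : ℓ ≤ c := by rw [hcv] at hℓle; exact_mod_cast hℓle
        have h2 := (hprop s2 hs2).1
        have hmax : max (s2 - ε') 0 = s2 - ε' := max_eq_left (by linarith)
        rw [hmax, hcv, hbval] at h2
        simp only [WithBot.map_coe] at h2
        have : c - ε' ≤ b := by exact_mod_cast h2
        linarith
    · push_neg at hc
      refine Eventually.of_forall fun n => lt_of_lt_of_le ?_ (hhit_nonneg (vn n))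
      linarith
  -- combine
  rw [Metric.tendsto_nhds]
  intro δ hδ
  filter_upwards [hup δ hδ, hlo δ hδ] with n h1 h2
  rw [Real.dist_eq, abs_sub_lt_iff]
  constructor <;> linarith

end
end

section
/- The metric space (𝕍⁺, d_L) is complete: every Cauchy sequence in (𝕍⁺, d_L) converges to an element of 𝕍⁺. -/
open MeasureTheory Filter Set Topology

noncomputable section

/-!
Elements of `𝕍⁺` are recorded by their real values on `(0,T)`, where `d_L` becomes a condition
on monotone real functions. For a `d_L`-Cauchy sequence `f n` the pointwise `limsup L` is finite
and monotone, and `f n` is eventually `ε`-close to `L` in both Lévy inequalities. `L` need not be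
left-continuous, so the limit is its left-continuous regularization `t ↦ sup_{0<s<t} L s`; this
costs only an arbitrarily small extra shift in one inequality and nothing in the other.
-/

/-- One of the two inequalities defining `d_L`, for real-valued functions; at `t ≤ ε` that
inequality holds trivially because `v 0 = ⊥`. -/
def LevyLE (T ε : ℝ) (g h : ℝ → ℝ) : Prop :=
  ∀ t, 0 < t - ε → t < T → g (t - ε) - ε ≤ h t

def levySet (T : ℝ) (g h : ℝ → ℝ) : Set ℝ :=
  {ε | 0 ≤ ε ∧ LevyLE T ε g h ∧ LevyLE T ε h g}

def botExtend (T : ℝ) (g : ℝ → ℝ) : ℝ → WithBot ℝ :=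
  fun t => if t ∈ Ioo 0 T then (g t : WithBot ℝ) else ⊥

section LevyLE

variable {T ε ε' : ℝ} {g g' h : ℝ → ℝ}

theorem LevyLE.mono (hg : MonotoneOn g (Ioo 0 T)) (hgh : LevyLE T ε g h) (hε : 0 ≤ ε)
    (hεε' : ε ≤ ε') : LevyLE T ε' g h := by
  intro t ht htT
  have := hg ⟨ht, by linarith⟩ ⟨by linarith, by linarith⟩ (by linarith : t - ε' ≤ t - ε)
  linarith [hgh t (by linarith) htT]

theorem LevyLE.of_le_left (hg' : ∀ t ∈ Ioo 0 T, g' t ≤ g t) (hgh : LevyLE T ε g h)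
    (hε : 0 ≤ ε) : LevyLE T ε g' h := fun t ht htT =>
  (sub_le_sub_right (hg' _ ⟨ht, by linarith⟩) ε).trans (hgh t ht htT)

theorem self_mem_levySet (hT : 0 ≤ T) : T ∈ levySet T g h :=
  ⟨hT, fun t ht htT => by linarith, fun t ht htT => by linarith⟩

theorem mem_levySet_of_sInf_lt (hT : 0 ≤ T) (hg : MonotoneOn g (Ioo 0 T))
    (hh : MonotoneOn h (Ioo 0 T)) (hlt : sInf (levySet T g h) < ε) : ε ∈ levySet T g h := by
  obtain ⟨δ, ⟨hδ, hgh, hhg⟩, hδε⟩ := exists_lt_of_csInf_lt ⟨T, self_mem_levySet hT⟩ hlt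
  exact ⟨hδ.trans hδε.le, hgh.mono hg hδ hδε.le, hhg.mono hh hδ hδε.le⟩

end LevyLE

section BotExtend

variable {T : ℝ} {g : ℝ → ℝ} {v : ℝ → WithBot ℝ}

theorem botExtend_of_mem {t : ℝ} (ht : t ∈ Ioo 0 T) : botExtend T g t = g t := if_pos ht

theorem botExtend_of_notMem {t : ℝ} (ht : t ∉ Ioo 0 T) : botExtend T g t = ⊥ := if_neg ht

theorem InVPlus.botExtend_unbotD (hv : InVPlus T v) :
    botExtend T (fun t => (v t).unbotD 0) = v := by
  funext t
  by_cases ht : t ∈ Ioo 0 T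
  · obtain ⟨r, hr⟩ := WithBot.ne_bot_iff_exists.mp (hv.2.2.1 t ht)
    simp [botExtend_of_mem ht, ← hr]
  · rw [botExtend_of_notMem ht, hv.1 t ht]

theorem InVPlus.monotoneOn_unbotD (hv : InVPlus T v) :
    MonotoneOn (fun t => (v t).unbotD 0) (Ioo 0 T) := by
  intro s hs t ht hst
  have := hv.2.1 s t hs.1.le hst ht.2
  rwa [← hv.botExtend_unbotD, botExtend_of_mem hs, botExtend_of_mem ht,
    WithBot.coe_le_coe] at this

theorem WithBot.isLUB_coe_image {α : Type*} [Preorder α] {S : Set α} {a : α}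
    (hS : S.Nonempty) (h : IsLUB S a) : IsLUB (((↑) : α → WithBot α) '' S) a := by
  refine ⟨?_, fun b hb => ?_⟩
  · rintro _ ⟨x, hx, rfl⟩
    exact WithBot.coe_le_coe.2 (h.1 hx)
  · induction b using WithBot.recBotCoe with
    | bot =>
      obtain ⟨x, hx⟩ := hS
      exact (WithBot.not_coe_le_bot _ (hb ⟨x, hx, rfl⟩)).elim
    | coe b => exact WithBot.coe_le_coe.2 (h.2 fun x hx => WithBot.coe_le_coe.1 (hb ⟨x, hx, rfl⟩))

theorem inVPlus_botExtend (hg : MonotoneOn g (Ioo 0 T))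
    (hlub : ∀ t ∈ Ioo 0 T, IsLUB (g '' Ioo 0 t) (g t)) : InVPlus T (botExtend T g) := by
  refine ⟨fun t => botExtend_of_notMem, fun s t hs hst htT => ?_,
    fun t ht => by simp [botExtend_of_mem ht], fun t ht => ?_⟩
  · rcases hs.eq_or_lt with rfl | hs
    · simp [botExtend_of_notMem]
    · rw [botExtend_of_mem ⟨hs, hst.trans_lt htT⟩, botExtend_of_mem ⟨hs.trans_le hst, htT⟩]
      exact WithBot.coe_le_coe.2 (hg ⟨hs, hst.trans_lt htT⟩ ⟨hs.trans_le hst, htT⟩ hst)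
  · have himage : botExtend T g '' Ico 0 t = insert ⊥ ((↑) '' (g '' Ioo 0 t)) := by
      rw [← Ioo_insert_left ht.1, image_insert_eq, botExtend_of_notMem (by simp), image_image]
      congr 1
      exact image_congr fun s hs => botExtend_of_mem ⟨hs.1, hs.2.trans ht.2⟩
    rw [himage, botExtend_of_mem ht, ← bot_sup_eq (a := (g t : WithBot ℝ))]
    have hne : (g '' Ioo 0 t).Nonempty := (nonempty_Ioo.2 ht.1).image g
    exact (WithBot.isLUB_coe_image hne (hlub t ht)).insert ⊥

theorem map_sub_botExtend_le_iff {h : ℝ → ℝ} {ε t : ℝ} (hε : 0 ≤ ε) (ht : t ∈ Ioo 0 T) :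
    (botExtend T g (max (t - ε) 0)).map (· - ε) ≤ botExtend T h t ↔
      (0 < t - ε → g (t - ε) - ε ≤ h t) := by
  rcases lt_or_ge 0 (t - ε) with hpos | hneg
  · rw [max_eq_left hpos.le, botExtend_of_mem ⟨hpos, by linarith [ht.2]⟩, botExtend_of_mem ht]
    simp [hpos]
  · simp [max_eq_right hneg, botExtend_of_notMem, hneg.not_gt]

theorem levyLE_iff_forall_map_sub_botExtend_le {h : ℝ → ℝ} {ε : ℝ} (hε : 0 ≤ ε) :
    LevyLE T ε g h ↔ ∀ t ∈ Ioo 0 T,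
      (botExtend T g (max (t - ε) 0)).map (· - ε) ≤ botExtend T h t := by
  refine ⟨fun hgh t ht => (map_sub_botExtend_le_iff hε ht).2 fun hpos => hgh t hpos ht.2,
    fun hgh t hpos htT => ?_⟩
  have ht : t ∈ Ioo 0 T := ⟨by linarith, htT⟩
  exact (map_sub_botExtend_le_iff hε ht).1 (hgh t ht) hpos

theorem dL_botExtend (g h : ℝ → ℝ) :
    dL T (botExtend T g) (botExtend T h) = sInf (levySet T g h) := by
  refine congrArg sInf (ext fun ε => and_congr_right fun hε => ?_)
  rw [levyLE_iff_forall_map_sub_botExtend_le hε, levyLE_iff_forall_map_sub_botExtend_le hε,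
    ← forall₂_and]

end BotExtend

section LevyCauchy

variable {T : ℝ} {f : ℕ → ℝ → ℝ}

theorem isBoundedUnder_le_of_levyCauchy
    (hf : ∀ ε > 0, ∃ N, ∀ m ≥ N, ∀ n ≥ N, LevyLE T ε (f m) (f n)) {t : ℝ} (ht : t ∈ Ioo 0 T) :
    IsBoundedUnder (· ≤ ·) atTop (f · t) := by
  obtain ⟨N, hN⟩ := hf ((T - t) / 2) (by linarith [ht.2])
  refine isBoundedUnder_of_eventually_le (a := f N ((t + T) / 2) + (T - t) / 2)
    (eventually_atTop.2 ⟨N, fun n hn => ?_⟩)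
  have := hN n hn N le_rfl ((t + T) / 2) (by linarith [ht.1]) (by linarith [ht.2])
  rw [show (t + T) / 2 - (T - t) / 2 = t by ring] at this
  linarith

theorem isBoundedUnder_ge_of_levyCauchy
    (hf : ∀ ε > 0, ∃ N, ∀ m ≥ N, ∀ n ≥ N, LevyLE T ε (f m) (f n)) {t : ℝ} (ht : t ∈ Ioo 0 T) :
    IsBoundedUnder (· ≥ ·) atTop (f · t) := by
  obtain ⟨N, hN⟩ := hf (t / 2) (half_pos ht.1)
  refine isBoundedUnder_of_eventually_ge (a := f N (t / 2) - t / 2)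
    (eventually_atTop.2 ⟨N, fun n hn => ?_⟩)
  have := hN N le_rfl n hn t (by linarith [ht.1]) ht.2
  rwa [sub_half] at this

theorem monotoneOn_limsup_of_levyCauchy (hmono : ∀ n, MonotoneOn (f n) (Ioo 0 T))
    (hf : ∀ ε > 0, ∃ N, ∀ m ≥ N, ∀ n ≥ N, LevyLE T ε (f m) (f n)) :
    MonotoneOn (fun t => limsup (f · t) atTop) (Ioo 0 T) := fun _ hs _ ht hst =>
  limsup_le_limsup (.of_forall fun n => hmono n hs ht hst)
    (isBoundedUnder_ge_of_levyCauchy hf hs).isCoboundedUnder_le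
    (isBoundedUnder_le_of_levyCauchy hf ht)

theorem levyLE_limsup_of_levyCauchy
    (hf : ∀ ε > 0, ∃ N, ∀ m ≥ N, ∀ n ≥ N, LevyLE T ε (f m) (f n)) {ε : ℝ} (hε : 0 < ε) :
    ∃ N, ∀ n ≥ N, LevyLE T ε (f n) (fun t => limsup (f · t) atTop) ∧
      LevyLE T ε (fun t => limsup (f · t) atTop) (f n) := by
  obtain ⟨N, hN⟩ := hf ε hε
  refine ⟨N, fun n hn => ⟨fun t hpos htT => ?_, fun t hpos htT => ?_⟩⟩
  · refine le_limsup_of_frequently_le ?_ (isBoundedUnder_le_of_levyCauchy hf ⟨by linarith, htT⟩)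
    exact (eventually_atTop.2 ⟨N, fun m hm => hN n hn m hm t hpos htT⟩).frequently
  · have : limsup (f · (t - ε)) atTop ≤ f n t + ε :=
      limsup_le_of_le (isBoundedUnder_ge_of_levyCauchy hf ⟨hpos, by linarith⟩).isCoboundedUnder_le
        (eventually_atTop.2 ⟨N, fun m hm => by linarith [hN m hm n hn t hpos htT]⟩)
    linarith

end LevyCauchy

def leftSup (g : ℝ → ℝ) (t : ℝ) : ℝ :=
  sSup (g '' Ioo 0 t)

section LeftSup

variable {T : ℝ} {g : ℝ → ℝ}

theorem bddAbove_image_Ioo_zero (hg : MonotoneOn g (Ioo 0 T)) {t : ℝ} (ht : t ∈ Ioo 0 T) :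
    BddAbove (g '' Ioo 0 t) :=
  ⟨g t, forall_mem_image.2 fun _ hs => hg ⟨hs.1, hs.2.trans ht.2⟩ ht hs.2.le⟩

theorem le_leftSup (hg : MonotoneOn g (Ioo 0 T)) {s t : ℝ} (hs : s ∈ Ioo 0 t) (ht : t ∈ Ioo 0 T) :
    g s ≤ leftSup g t :=
  le_csSup (bddAbove_image_Ioo_zero hg ht) (mem_image_of_mem g hs)

theorem leftSup_le (hg : MonotoneOn g (Ioo 0 T)) {t : ℝ} (ht : t ∈ Ioo 0 T) :
    leftSup g t ≤ g t :=
  csSup_le ((nonempty_Ioo.2 ht.1).image g)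
    (forall_mem_image.2 fun _ hs => hg ⟨hs.1, hs.2.trans ht.2⟩ ht hs.2.le)

theorem monotoneOn_leftSup (hg : MonotoneOn g (Ioo 0 T)) : MonotoneOn (leftSup g) (Ioo 0 T) :=
  fun _ hs _ ht hst => csSup_le_csSup (bddAbove_image_Ioo_zero hg ht)
    ((nonempty_Ioo.2 hs.1).image g) (image_mono (Ioo_subset_Ioo_right hst))

theorem isLUB_leftSup (hg : MonotoneOn g (Ioo 0 T)) {t : ℝ} (ht : t ∈ Ioo 0 T) :
    IsLUB (leftSup g '' Ioo 0 t) (leftSup g t) := by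
  refine ⟨forall_mem_image.2 fun s hs =>
    monotoneOn_leftSup hg ⟨hs.1, hs.2.trans ht.2⟩ ht hs.2.le, fun b hb => ?_⟩
  refine csSup_le ((nonempty_Ioo.2 ht.1).image g) (forall_mem_image.2 fun s hs => ?_)
  -- `g s` is already below `leftSup g` at the midpoint of `s` and `t`.
  have hmid : (s + t) / 2 ∈ Ioo 0 t := ⟨by linarith [hs.1, hs.2], by linarith [hs.2]⟩
  exact (le_leftSup hg ⟨hs.1, by linarith [hs.2]⟩ ⟨hmid.1, hmid.2.trans ht.2⟩).trans
    (hb (mem_image_of_mem _ hmid))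

theorem LevyLE.leftSup_right {h : ℝ → ℝ} {ε ε' : ℝ} (hg : MonotoneOn g (Ioo 0 T))
    (hhg : LevyLE T ε h g) (hε : 0 ≤ ε) (hεε' : ε < ε') : LevyLE T ε' h (leftSup g) := by
  intro t hpos htT
  have := hhg (t - (ε' - ε)) (by linarith) (by linarith)
  have := le_leftSup hg (s := t - (ε' - ε)) ⟨by linarith, by linarith⟩ ⟨by linarith, htT⟩
  rw [show t - (ε' - ε) - ε = t - ε' by ring] at *
  linarith

end LeftSup

theorem levyLE_unbotD_of_dL_lt {T ε : ℝ} (hT : 0 ≤ T) {v₁ v₂ : ℝ → WithBot ℝ}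
    (hv₁ : InVPlus T v₁) (hv₂ : InVPlus T v₂) (h : dL T v₁ v₂ < ε) :
    LevyLE T ε (fun t => (v₁ t).unbotD 0) (fun t => (v₂ t).unbotD 0) := by
  rw [← hv₁.botExtend_unbotD, ← hv₂.botExtend_unbotD, dL_botExtend] at h
  exact (mem_levySet_of_sInf_lt hT hv₁.monotoneOn_unbotD hv₂.monotoneOn_unbotD h).2.1

theorem tendsto_dL_botExtend {T : ℝ} {f : ℕ → ℝ → ℝ} {g : ℝ → ℝ}
    (h : ∀ ε > 0, ∃ N, ∀ n ≥ N, LevyLE T ε (f n) g ∧ LevyLE T ε g (f n)) :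
    Tendsto (fun n => dL T (botExtend T (f n)) (botExtend T g)) atTop (𝓝 0) := by
  refine Metric.tendsto_atTop.2 fun δ hδ => ?_
  obtain ⟨N, hN⟩ := h (δ / 2) (half_pos hδ)
  refine ⟨N, fun n hn => ?_⟩
  rw [dL_botExtend, Real.dist_eq, sub_zero,
    abs_of_nonneg (Real.sInf_nonneg fun _ hε => hε.1)]
  have hmem : δ / 2 ∈ levySet T (f n) g := ⟨(half_pos hδ).le, hN n hn⟩
  exact (csInf_le ⟨0, fun _ hε => hε.1⟩ hmem).trans_lt (half_lt_self hδ)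

theorem exists_levyLimit {T : ℝ} {f : ℕ → ℝ → ℝ} (hmono : ∀ n, MonotoneOn (f n) (Ioo 0 T))
    (hf : ∀ ε > 0, ∃ N, ∀ m ≥ N, ∀ n ≥ N, LevyLE T ε (f m) (f n)) :
    ∃ g : ℝ → ℝ, MonotoneOn g (Ioo 0 T) ∧ (∀ t ∈ Ioo 0 T, IsLUB (g '' Ioo 0 t) (g t)) ∧
      ∀ ε > 0, ∃ N, ∀ n ≥ N, LevyLE T ε (f n) g ∧ LevyLE T ε g (f n) := by
  have hL := monotoneOn_limsup_of_levyCauchy hmono hf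
  refine ⟨leftSup fun t => limsup (f · t) atTop, monotoneOn_leftSup hL,
    fun t => isLUB_leftSup hL, fun ε hε => ?_⟩
  obtain ⟨N, hN⟩ := levyLE_limsup_of_levyCauchy hf (half_pos hε)
  exact ⟨N, fun n hn => ⟨(hN n hn).1.leftSup_right hL (half_pos hε).le (half_lt_self hε),
    (((hN n hn).2.of_le_left (fun t => leftSup_le hL) (half_pos hε).le).mono
      (monotoneOn_leftSup hL) (half_pos hε).le (half_le_self hε.le))⟩⟩

/-- **`(𝕍⁺, d_L)` is complete (Step 3 of Proposition D.1).**
Every Cauchy sequence in `(𝕍⁺, d_L)` converges (in `d_L`) to an element of `𝕍⁺`. -/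
theorem dL_complete (T : ℝ) (hT : 0 < T)
    (v : ℕ → ℝ → WithBot ℝ) (hv : ∀ n, InVPlus T (v n))
    (hcauchy : ∀ ε : ℝ, 0 < ε → ∃ N : ℕ, ∀ m n : ℕ, N ≤ m → N ≤ n →
      dL T (v m) (v n) < ε) :
    ∃ w : ℝ → WithBot ℝ, InVPlus T w ∧
      Tendsto (fun n => dL T (v n) w) atTop (nhds 0) := by
  have hf : ∀ ε > 0, ∃ N, ∀ m ≥ N, ∀ n ≥ N,
      LevyLE T ε (fun t => (v m t).unbotD 0) (fun t => (v n t).unbotD 0) := fun ε hε =>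
    (hcauchy ε hε).imp fun N hN m hm n hn =>
      levyLE_unbotD_of_dL_lt hT.le (hv m) (hv n) (hN m n hm hn)
  obtain ⟨g, hg, hglub, hlim⟩ := exists_levyLimit (fun n => (hv n).monotoneOn_unbotD) hf
  refine ⟨botExtend T g, inVPlus_botExtend hg hglub, ?_⟩
  simpa only [(hv _).botExtend_unbotD] using tendsto_dL_botExtend hlim

end
end
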